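/- arXiv:2209.07451 — 8 statements merged into one kernel-verified Lean document; each statement's English description precedes it below -/
import Mathlib

section
/- Let a, b, m, n : ℤ → ℝ be a positive solution of the ABMN system on ℤ. Then the solution is strict: for every i ∈ ℤ one has m_{i+1} > m_i and n_i > n_{i+1}. -/
/-- The ABMN system on ℤ: four equations for every index `i`, together with
the nonnegativity of the stake sequences `a` and `b`. -/
def IsABMN (a b m n : ℤ → ℝ) : Prop :=
  (∀ i, 0 ≤ a i) ∧ (∀ i, 0 ≤ b i) ∧
  (∀ i : ℤ, (a i + b i) * (m i + a i) = a i * m (i + 1) + b i * m (i - 1)) ∧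
  (∀ i : ℤ, (a i + b i) * (n i + b i) = a i * n (i + 1) + b i * n (i - 1)) ∧
  (∀ i : ℤ, (a i + b i) ^ 2 = b i * (m (i + 1) - m (i - 1))) ∧
  (∀ i : ℤ, (a i + b i) ^ 2 = a i * (n (i - 1) - n (i + 1)))

/-- Any positive ABMN solution is strict: `m` is strictly increasing and `n`
strictly decreasing between consecutive indices. -/
theorem positive_abmn_is_strict (a b m n : ℤ → ℝ) (h : IsABMN a b m n)
    (ha : ∀ i, 0 < a i) (hb : ∀ i, 0 < b i) :
    ∀ i : ℤ, m i < m (i + 1) ∧ n (i + 1) < n i := by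
  obtain ⟨-, -, h1, h2, h3, h4⟩ := h
  intro i
  have hai := ha i
  have hbi := hb i
  have hab : 0 < a i + b i := by linarith
  have e1 := h1 i
  have e2 := h2 i
  have e3 := h3 i
  have e4 := h4 i
  constructor
  · have key : (a i + b i) * (m (i + 1) - m i) = (a i + b i) * (2 * a i + b i) := by
      linear_combination (-1 : ℝ) * e1 - e3
    nlinarith [mul_pos hab hab, mul_pos hab hai]
  · have key : a i * ((a i + b i) * (n i - n (i + 1))) = (a i + b i) * (b i) ^ 2 := by
      linear_combination a i * e2 - b i * e4
    nlinarith [mul_pos hab (mul_pos hbi hbi), mul_pos hai hab]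
end

section
/- Let a, b, m, n : ℤ → ℝ be a positive solution of the ABMN system on ℤ. Then the sequence (m_i) is strictly increasing and bounded, and the sequence (n_i) is strictly decreasing and bounded. Consequently the four limits m_{−∞} = lim_{k→∞} m_{−k}, m_∞ = lim_{k→∞} m_k, n_{−∞} = lim_{k→∞} n_{−k} and n_∞ = lim_{k→∞} n_k exist as real numbers, satisfy m_{−∞} < m_∞ and n_∞ < n_{−∞}, and the Mina margin (n_{−∞} − n_∞)/(m_∞ − m_{−∞}) is a positive finite real number. -/
open Set

theorem bddAbove_range_of_monotone_of_sub_le_half {m : ℤ → ℝ} (hm : Monotone m) (N : ℤ)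
    (h : ∀ i ≥ N, m (i + 2) - m (i + 1) ≤ (m (i + 1) - m i) / 2) : BddAbove (range m) := by
  -- `m (i + 1) + (m (i + 1) - m i)` dominates all later terms and does not increase from `N` on.
  have key : ∀ i ≥ N, 2 * m (i + 1) - m i ≤ 2 * m (N + 1) - m N := by
    intro i hi
    induction i, hi using Int.leInduction with
    | base => exact le_rfl
    | succ i hi ih =>
      rw [add_assoc, one_add_one_eq_two]
      linarith [h i hi]
  refine ⟨2 * m (N + 1) - m N, ?_⟩
  rintro _ ⟨i, rfl⟩
  rcases le_total i N with hi | hi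
  · linarith [hm hi, hm (lt_add_one N).le]
  · linarith [key i hi, hm (lt_add_one i).le]

theorem bddBelow_range_of_antitone_of_sub_le {m n : ℤ → ℝ} (hn : Antitone n)
    (hm : BddAbove (range m)) (N : ℤ) (h : ∀ i ≥ N, n i - n (i + 1) ≤ m (i + 1) - m i) :
    BddBelow (range n) := by
  obtain ⟨M, hM⟩ := hm
  have key : ∀ i ≥ N, n N + m N ≤ n i + m i := by
    intro i hi
    induction i, hi using Int.leInduction with
    | base => exact le_rfl
    | succ i hi ih => linarith [h i hi]
  refine ⟨n N + m N - M, ?_⟩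
  rintro _ ⟨i, rfl⟩
  rcases le_total i N with hi | hi
  · linarith [hn hi, hM ⟨N, rfl⟩]
  · linarith [key i hi, hM ⟨i, rfl⟩]

theorem exists_forall_ge_le_of_le_half {u : ℤ → ℝ} (hu0 : ∀ i, 0 ≤ u i)
    (hu : ∀ i, u (i + 1) ≤ u i / 2) {ε : ℝ} (hε : 0 < ε) : ∃ N : ℤ, ∀ i ≥ N, u i ≤ ε := by
  have hanti : Antitone u := antitone_int_of_succ_le fun i => by linarith [hu i, hu0 i]
  have hpow : ∀ k : ℕ, u k * 2 ^ k ≤ u 0 := by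
    intro k
    induction k with
    | zero => simp
    | succ k ih =>
      push_cast
      rw [pow_succ]
      nlinarith [hu k, pow_pos (two_pos : (0 : ℝ) < 2) k]
  obtain ⟨N, hN⟩ := pow_unbounded_of_one_lt (u 0 / ε) one_lt_two
  rw [div_lt_iff₀ hε] at hN
  refine ⟨N, fun i hi => (hanti hi).trans ?_⟩
  exact le_of_mul_le_mul_right (by linarith [hpow N]) (pow_pos two_pos N)

theorem ciInf_lt_ciSup_of_lt {α ι : Type*} [ConditionallyCompleteLattice α] {f : ι → α}
    (hb : BddBelow (range f)) (ha : BddAbove (range f)) {i j : ι} (h : f i < f j) :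
    ⨅ k, f k < ⨆ k, f k :=
  (ciInf_le hb i).trans_lt (h.trans_le (le_ciSup ha j))

theorem two_mul_mul_lt_mul_of_sq_eq {A B C D : ℝ} (hA : 0 < A) (hB : 0 < B) (hC : 0 < C)
    (hD : 0 < D) (hC2 : C ^ 2 = D * (2 * A + B)) (hB2 : B ^ 2 = A * (C + 2 * D)) :
    2 * (A * D) < B * C := by
  have hsq : (B * C) ^ 2 = (2 * (A * D)) ^ 2 + A * D * (2 * A * C + B * C + 2 * B * D) := by
    linear_combination C ^ 2 * hB2 + A * (C + 2 * D) * hC2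
  refine lt_of_pow_lt_pow_left₀ 2 (by positivity) ?_
  rw [hsq]
  exact lt_add_of_pos_right _ (by positivity)

namespace IsABMN

variable {a b m n : ℤ → ℝ}

theorem reflect (h : IsABMN a b m n) :
    IsABMN (fun i => b (-i)) (fun i => a (-i)) (fun i => n (-i)) (fun i => m (-i)) := by
  obtain ⟨ha, hb, hm, hn, hm', hn'⟩ := h
  have hs (i : ℤ) : -(i + 1) = -i - 1 ∧ -(i - 1) = -i + 1 := ⟨by ring, by ring⟩
  refine ⟨fun i => hb (-i), fun i => ha (-i), fun i => ?_, fun i => ?_, fun i => ?_,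
    fun i => ?_⟩ <;> simp only [(hs i).1, (hs i).2]
  · linear_combination hn (-i)
  · linear_combination hm (-i)
  · linear_combination hn' (-i)
  · linear_combination hm' (-i)

theorem m_succ (h : IsABMN a b m n) {i : ℤ} (hi : a i + b i ≠ 0) :
    m (i + 1) = m i + (2 * a i + b i) :=
  mul_left_cancel₀ hi (by linear_combination -h.2.2.1 i - h.2.2.2.2.1 i)

theorem n_pred (h : IsABMN a b m n) {i : ℤ} (hi : a i + b i ≠ 0) :
    n (i - 1) = n i + (a i + 2 * b i) :=
  mul_left_cancel₀ hi (by linear_combination -h.2.2.2.1 i - h.2.2.2.2.2 i)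

theorem b_mul_m_sub_pred (h : IsABMN a b m n) {i : ℤ} (hi : a i + b i ≠ 0) :
    b i * (m i - m (i - 1)) = a i ^ 2 := by
  linear_combination h.2.2.1 i + a i * h.m_succ hi

theorem a_mul_n_sub_succ (h : IsABMN a b m n) {i : ℤ} (hi : a i + b i ≠ 0) :
    a i * (n i - n (i + 1)) = b i ^ 2 := by
  linear_combination h.2.2.2.1 i + b i * h.n_pred hi

theorem a_succ_sq (h : IsABMN a b m n) {i : ℤ} (hi : a i + b i ≠ 0)
    (hi' : a (i + 1) + b (i + 1) ≠ 0) : a (i + 1) ^ 2 = b (i + 1) * (2 * a i + b i) := by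
  have := h.b_mul_m_sub_pred hi'
  rw [add_sub_cancel_right, h.m_succ hi] at this
  linear_combination -this

theorem b_sq (h : IsABMN a b m n) {i : ℤ} (hi : a i + b i ≠ 0)
    (hi' : a (i + 1) + b (i + 1) ≠ 0) : b i ^ 2 = a i * (a (i + 1) + 2 * b (i + 1)) := by
  have := h.n_pred hi'
  rw [add_sub_cancel_right] at this
  linear_combination -h.a_mul_n_sub_succ hi + a i * this

section Positive

variable (h : IsABMN a b m n) (ha : ∀ i, 0 < a i) (hb : ∀ i, 0 < b i)
include h ha hb

theorem strictMono_m : StrictMono m :=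
  strictMono_int_of_lt_succ fun i => by
    rw [h.m_succ (add_pos (ha i) (hb i)).ne']
    linarith [ha i, hb i]

theorem strictAnti_n : StrictAnti n :=
  strictAnti_int_of_succ_lt fun i => by
    have hdiff := h.a_mul_n_sub_succ (add_pos (ha i) (hb i)).ne'
    have : 0 < n i - n (i + 1) := pos_of_mul_pos_right (hdiff ▸ pow_pos (hb i) 2) (ha i).le
    linarith

theorem ratio_succ_lt_half (i : ℤ) : b (i + 1) / a (i + 1) < b i / a i / 2 := by
  have hi := (add_pos (ha i) (hb i)).ne'
  have hi' := (add_pos (ha (i + 1)) (hb (i + 1))).ne'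
  have := two_mul_mul_lt_mul_of_sq_eq (ha i) (hb i) (ha (i + 1)) (hb (i + 1))
    (h.a_succ_sq hi hi') (h.b_sq hi hi')
  rw [div_div, div_lt_div_iff₀ (ha _) (mul_pos (ha i) two_pos)]
  linarith

theorem exists_forall_ge_le_mul {ε : ℝ} (hε : 0 < ε) : ∃ N : ℤ, ∀ i ≥ N, b i ≤ ε * a i := by
  obtain ⟨N, hN⟩ := exists_forall_ge_le_of_le_half (u := fun i => b i / a i)
    (fun i => (div_pos (hb i) (ha i)).le) (fun i => (h.ratio_succ_lt_half ha hb i).le) hε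
  exact ⟨N, fun i hi => (div_le_iff₀ (ha i)).1 (hN i hi)⟩

theorem bddAbove_range_m : BddAbove (range m) := by
  obtain ⟨N, hN⟩ := h.exists_forall_ge_le_mul ha hb (by norm_num : (0 : ℝ) < 1 / 5)
  refine bddAbove_range_of_monotone_of_sub_le_half (h.strictMono_m ha hb).monotone N
    fun i hi => ?_
  have hi0 := (add_pos (ha i) (hb i)).ne'
  have hi1 := (add_pos (ha (i + 1)) (hb (i + 1))).ne'
  have hsq := h.a_succ_sq hi0 hi1
  have hsmall := hN (i + 1) (by linarith)
  have halve : 2 * a (i + 1) + b (i + 1) ≤ (2 * a i + b i) / 2 := by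
    refine le_of_mul_le_mul_left ?_ (hb (i + 1))
    nlinarith [hsq, hsmall, ha (i + 1), hb (i + 1)]
  rw [show i + 2 = i + 1 + 1 by ring]
  linarith [h.m_succ hi0, h.m_succ hi1]

theorem bddBelow_range_n : BddBelow (range n) := by
  obtain ⟨N, hN⟩ := h.exists_forall_ge_le_mul ha hb one_pos
  refine bddBelow_range_of_antitone_of_sub_le (h.strictAnti_n ha hb).antitone
    (h.bddAbove_range_m ha hb) N fun i hi => ?_
  have hi0 := (add_pos (ha i) (hb i)).ne'
  have hdiff : n i - n (i + 1) ≤ b i := by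
    refine le_of_mul_le_mul_left ?_ (ha i)
    rw [h.a_mul_n_sub_succ hi0]
    nlinarith [hN i hi, hb i]
  linarith [h.m_succ hi0, ha i]

end Positive

end IsABMN

/-- For a positive ABMN solution, `m` is strictly increasing and bounded,
`n` is strictly decreasing and bounded, the four boundary limits exist as
real numbers, satisfy `m₋∞ < m∞` and `n∞ < n₋∞`, and the Mina margin
`(n₋∞ − n∞)/(m∞ − m₋∞)` is a positive real. -/
theorem positive_abmn_boundary_limits (a b m n : ℤ → ℝ) (h : IsABMN a b m n)
    (ha : ∀ i, 0 < a i) (hb : ∀ i, 0 < b i) :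
    StrictMono m ∧ BddAbove (Set.range m) ∧ BddBelow (Set.range m) ∧
    StrictAnti n ∧ BddAbove (Set.range n) ∧ BddBelow (Set.range n) ∧
    ∃ mNegInf mInf nNegInf nInf : ℝ,
      Filter.Tendsto m Filter.atBot (nhds mNegInf) ∧
      Filter.Tendsto m Filter.atTop (nhds mInf) ∧
      Filter.Tendsto n Filter.atBot (nhds nNegInf) ∧
      Filter.Tendsto n Filter.atTop (nhds nInf) ∧
      mNegInf < mInf ∧ nInf < nNegInf ∧
      0 < (nNegInf - nInf) / (mInf - mNegInf) := by
  have hm := h.strictMono_m ha hb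
  have hn := h.strictAnti_n ha hb
  have hmA := h.bddAbove_range_m ha hb
  have hnB := h.bddBelow_range_n ha hb
  have hra : ∀ i, 0 < b (-i) := fun i => hb (-i)
  have hrb : ∀ i, 0 < a (-i) := fun i => ha (-i)
  have hnA : BddAbove (range n) :=
    neg_surjective.range_comp n ▸ h.reflect.bddAbove_range_m hra hrb
  have hmB : BddBelow (range m) :=
    neg_surjective.range_comp m ▸ h.reflect.bddBelow_range_n hra hrb
  have hm_lt : ⨅ i, m i < ⨆ i, m i := ciInf_lt_ciSup_of_lt hmB hmA (hm zero_lt_one)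
  have hn_lt : ⨅ i, n i < ⨆ i, n i := ciInf_lt_ciSup_of_lt hnB hnA (hn zero_lt_one)
  exact ⟨hm, hmA, hmB, hn, hnA, hnB, ⨅ i, m i, ⨆ i, m i, ⨆ i, n i, ⨅ i, n i,
    tendsto_atBot_ciInf hm.monotone hmB, tendsto_atTop_ciSup hm.monotone hmA,
    tendsto_atBot_ciSup hn.antitone hnA, tendsto_atTop_ciInf hn.antitone hnB, hm_lt, hn_lt,
    div_pos (sub_pos.2 hn_lt) (sub_pos.2 hm_lt)⟩
end

section
/- Let a, b, m, n : ℤ → ℝ be a positive solution of the ABMN system on ℤ. Then (m, n) solves the MN system on ℤ: for every i ∈ ℤ, (m_i − m_{i−1})·(m_{i+1} − m_{i−1} + n_{i−1} − n_{i+1})² = (m_{i+1} − m_{i−1})³ and (n_i − n_{i+1})·(m_{i+1} − m_{i−1} + n_{i−1} − n_{i+1})² = (n_{i−1} − n_{i+1})³. -/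
/-- A positive solution of the ABMN system on ℤ solves the MN system on ℤ. -/
theorem positive_abmn_solves_mn (a b m n : ℤ → ℝ) (h : IsABMN a b m n)
    (ha : ∀ i, 0 < a i) (hb : ∀ i, 0 < b i) :
    ∀ i : ℤ,
      (m i - m (i - 1)) * (m (i + 1) - m (i - 1) + n (i - 1) - n (i + 1)) ^ 2
        = (m (i + 1) - m (i - 1)) ^ 3 ∧
      (n i - n (i + 1)) * (m (i + 1) - m (i - 1) + n (i - 1) - n (i + 1)) ^ 2
        = (n (i - 1) - n (i + 1)) ^ 3 := by
  intro i
  obtain ⟨_, _, h1, h2, h3, h4⟩ := h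
  have hA := ha i
  have hB := hb i
  have hs : (0:ℝ) < a i + b i := by linarith
  have key1 : (a i + b i) * (b i * (m i - m (i - 1)))
      = (a i + b i) * (a i) ^ 2 := by
    linear_combination (b i) * h1 i - (a i) * h3 i
  have key2 : (a i + b i) * (a i * (n i - n (i + 1)))
      = (a i + b i) * (b i) ^ 2 := by
    linear_combination (a i) * h2 i - (b i) * h4 i
  have hd : m i - m (i - 1) = (a i) ^ 2 / b i := by
    have := mul_left_cancel₀ (ne_of_gt hs) key1
    field_simp
    linarith
  have he : n i - n (i + 1) = (b i) ^ 2 / a i := by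
    have := mul_left_cancel₀ (ne_of_gt hs) key2
    field_simp
    linarith
  have hP : m (i + 1) - m (i - 1) = (a i + b i) ^ 2 / b i := by
    have := h3 i; field_simp; linarith
  have hQ : n (i - 1) - n (i + 1) = (a i + b i) ^ 2 / a i := by
    have := h4 i; field_simp; linarith
  constructor
  · have : m (i + 1) - m (i - 1) + n (i - 1) - n (i + 1)
        = (a i + b i) ^ 2 / b i + (a i + b i) ^ 2 / a i := by
      rw [← hP, ← hQ]; ring
    rw [hd, this, hP]
    field_simp
  · have : m (i + 1) - m (i - 1) + n (i - 1) - n (i + 1)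
        = (a i + b i) ^ 2 / b i + (a i + b i) ^ 2 / a i := by
      rw [← hP, ← hQ]; ring
    rw [he, this, hQ]
    field_simp
end

section
/- Let a, b, m, n : ℤ → ℝ be a positive solution of the ABMN system on ℤ, and for i ∈ ℤ set φ_i = (n_{i−1} − n_i)/(m_i − m_{i−1}). Then for every i ∈ ℤ: 1/c(φ_i) = (m_i − m_{i−1})/(m_{i+1} − m_{i−1}), 1/d(φ_i) = (n_{i−1} − n_i)/(n_{i−1} − n_{i+1}), and s(φ_i) = φ_{i+1}. -/
/-- `ω(x) = √(8x+1)`. -/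
noncomputable def wF (x : ℝ) : ℝ := Real.sqrt (8 * x + 1)

/-- `c(x) = (ω+3)²/16`. -/
noncomputable def cF (x : ℝ) : ℝ := (wF x + 3) ^ 2 / 16

/-- `d(x) = (ω+3)²/(8(ω+1))`. -/
noncomputable def dF (x : ℝ) : ℝ := (wF x + 3) ^ 2 / (8 * (wF x + 1))

/-- `s(x) = (ω−1)²/(4(ω+7))`. -/
noncomputable def sF (x : ℝ) : ℝ := (wF x - 1) ^ 2 / (4 * (wF x + 7))

/-- For a positive ABMN solution with `φᵢ = (nᵢ₋₁ − nᵢ)/(mᵢ − mᵢ₋₁)`, one has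
`1/c(φᵢ) = (mᵢ − mᵢ₋₁)/(mᵢ₊₁ − mᵢ₋₁)`, `1/d(φᵢ) = (nᵢ₋₁ − nᵢ)/(nᵢ₋₁ − nᵢ₊₁)` and
`s(φᵢ) = φᵢ₊₁`. -/
theorem abmn_phi_recursion (a b m n : ℤ → ℝ) (h : IsABMN a b m n)
    (ha : ∀ i, 0 < a i) (hb : ∀ i, 0 < b i)
    (φ : ℤ → ℝ) (hφ : ∀ i : ℤ, φ i = (n (i - 1) - n i) / (m i - m (i - 1))) :
    ∀ i : ℤ,
      1 / cF (φ i) = (m i - m (i - 1)) / (m (i + 1) - m (i - 1)) ∧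
      1 / dF (φ i) = (n (i - 1) - n i) / (n (i - 1) - n (i + 1)) ∧
      sF (φ i) = φ (i + 1) := by
  obtain ⟨-, -, h1, h2, h3, h4⟩ := h
  intro i
  have hA := ha i; have hB := hb i
  have hAB : (0:ℝ) < a i + b i := by linarith
  have hA' : a i ≠ 0 := hA.ne'
  have hB' : b i ≠ 0 := hB.ne'
  have hAB' : a i + b i ≠ 0 := hAB.ne'
  have e1 := h1 i; have e2 := h2 i; have e3 := h3 i; have e4 := h4 i
  have k1 : m i - m (i - 1) = (a i) ^ 2 / b i := by
    have key : (a i + b i) * (b i * (m i - m (i - 1)) - (a i) ^ 2) = 0 := by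
      linear_combination (b i) * e1 - (a i) * e3
    have h0 := (mul_eq_zero.1 key).resolve_left hAB'
    field_simp
    linear_combination h0
  have k2 : m (i + 1) - m (i - 1) = (a i + b i) ^ 2 / b i := by
    field_simp
    linear_combination -e3
  have k3 : m (i + 1) - m i = 2 * a i + b i := by
    have : m (i + 1) - m i = (a i + b i) ^ 2 / b i - (a i) ^ 2 / b i := by linarith
    rw [this]; field_simp; ring
  have k4 : n (i - 1) - n (i + 1) = (a i + b i) ^ 2 / a i := by
    field_simp
    linear_combination -e4
  have k5 : n (i - 1) - n i = a i + 2 * b i := by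
    have key : ((a i + b i) * a i) * (n (i - 1) - n i - (a i + 2 * b i)) = 0 := by
      linear_combination (-(a i)) * e2 - (a i) * e4
    have h0 := (mul_eq_zero.1 key).resolve_left (by positivity)
    linarith
  have k6 : n i - n (i + 1) = (b i) ^ 2 / a i := by
    have : n i - n (i + 1) = (a i + b i) ^ 2 / a i - (a i + 2 * b i) := by linarith
    rw [this]; field_simp; ring
  have hφi : φ i = b i * (a i + 2 * b i) / (a i) ^ 2 := by
    rw [hφ i, k5, k1]; field_simp
  have hw : wF (φ i) = (a i + 4 * b i) / a i := by
    rw [wF]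
    have h8 : 8 * φ i + 1 = ((a i + 4 * b i) / a i) ^ 2 := by
      rw [hφi]; field_simp; ring
    rw [h8, Real.sqrt_sq (by positivity)]
  have h2AB : a i + 2 * b i ≠ 0 := by positivity
  have h2BA : 2 * a i + b i ≠ 0 := by positivity
  have hc : cF (φ i) = (a i + b i) ^ 2 / (a i) ^ 2 := by
    rw [cF, hw]; field_simp; ring
  have hd : dF (φ i) = (a i + b i) ^ 2 / (a i * (a i + 2 * b i)) := by
    rw [dF, hw]
    rw [div_eq_div_iff (by positivity) (by positivity)]
    field_simp
    ring
  have hs : sF (φ i) = (b i) ^ 2 / (a i * (2 * a i + b i)) := by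
    rw [sF, hw]
    rw [div_eq_div_iff (by positivity) (by positivity)]
    field_simp
    ring
  refine ⟨?_, ?_, ?_⟩
  · rw [hc, k1, k2]; field_simp
  · rw [hd, k5, k4]; field_simp
  · have hp := hφ (i + 1)
    simp only [add_sub_cancel_right] at hp
    rw [hs, hp, k6, k3]
    field_simp
end

section
/- Let a, b, m, n : ℤ → ℝ be a positive solution of the ABMN system on ℤ, and for i ∈ ℤ set φ_i = (n_{i−1} − n_i)/(m_i − m_{i−1}). Then there is exactly one index k ∈ ℤ such that φ_k ∈ (1/3, 3]; moreover the sequence (φ_i) is strictly decreasing, tends to 0 as i → ∞, and tends to ∞ as i → −∞. -/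
/-- `9·φ(i+1) ≤ φ i` in terms of `A = a i`, `B = b i`. -/
lemma abmn_aux_nine (A B : ℝ) (hA : 0 < A) (hB : 0 < B) :
    9 * (B ^ 2 / (A * (2 * A + B))) ≤ B * (A + 2 * B) / A ^ 2 := by
  rw [mul_div_assoc', div_le_div_iff₀ (by positivity) (by positivity)]
  nlinarith [mul_nonneg (mul_pos hA hB).le (sq_nonneg (A - B)), sq_nonneg (A - B),
    mul_pos hA hB]

/-- `φ(i+1) < φ i` in terms of `A = a i`, `B = b i`. -/
lemma abmn_aux_lt (A B : ℝ) (hA : 0 < A) (hB : 0 < B) :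
    B ^ 2 / (A * (2 * A + B)) < B * (A + 2 * B) / A ^ 2 := by
  rw [div_lt_div_iff₀ (by positivity) (by positivity)]
  nlinarith [mul_pos hA hB, mul_pos (mul_pos hA hA) hB, mul_pos (mul_pos hA hB) hB]

/-- `3 < φ i → 1/3 < φ (i+1)` in terms of `A = a i`, `B = b i`. -/
lemma abmn_aux_step (A B : ℝ) (hA : 0 < A) (hB : 0 < B)
    (h3 : 3 < B * (A + 2 * B) / A ^ 2) :
    1 / 3 < B ^ 2 / (A * (2 * A + B)) := by
  rw [lt_div_iff₀ (by positivity)] at h3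
  rw [lt_div_iff₀ (by positivity)]
  have hAB : A < B := by nlinarith [mul_pos hA hB]
  nlinarith [mul_pos (sub_pos.2 hAB) (show (0:ℝ) < 2 * A + 3 * B by positivity)]

/-- For a positive ABMN solution with `φᵢ = (nᵢ₋₁ − nᵢ)/(mᵢ − mᵢ₋₁)`, there is a
unique battlefield index `k` with `φ_k ∈ (1/3, 3]`; moreover `φ` is strictly
decreasing, tends to `0` at `+∞` and to `+∞` at `−∞`. -/
theorem abmn_battlefield_index (a b m n : ℤ → ℝ) (h : IsABMN a b m n)
    (ha : ∀ i, 0 < a i) (hb : ∀ i, 0 < b i)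
    (φ : ℤ → ℝ) (hφ : ∀ i : ℤ, φ i = (n (i - 1) - n i) / (m i - m (i - 1))) :
    (∃! k : ℤ, φ k ∈ Set.Ioc (1 / 3 : ℝ) 3) ∧
    StrictAnti φ ∧
    Filter.Tendsto φ Filter.atTop (nhds 0) ∧
    Filter.Tendsto φ Filter.atBot Filter.atTop := by
  classical
  obtain ⟨-, -, e1, e2, e3, e4⟩ := h
  -- basic increment identities
  have hm1 : ∀ i : ℤ, b i * (m i - m (i - 1)) = a i ^ 2 := by
    intro i
    exact mul_left_cancel₀ (ne_of_gt (add_pos (ha i) (hb i)))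
      (show (a i + b i) * (b i * (m i - m (i - 1))) = (a i + b i) * (a i ^ 2) by
        linear_combination b i * e1 i - a i * e3 i)
  have hm2 : ∀ i : ℤ, m (i + 1) - m i = 2 * a i + b i := by
    intro i
    exact mul_left_cancel₀ (show b i ≠ 0 from (hb i).ne')
      (show b i * (m (i + 1) - m i) = b i * (2 * a i + b i) by
        linear_combination - e3 i - hm1 i)
  have hn1 : ∀ i : ℤ, n (i - 1) - n i = a i + 2 * b i := by
    intro i
    exact mul_left_cancel₀ (ne_of_gt (add_pos (ha i) (hb i)))
      (show (a i + b i) * (n (i - 1) - n i) = (a i + b i) * (a i + 2 * b i) by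
        linear_combination - e2 i - e4 i)
  have hn2 : ∀ i : ℤ, a i * (n i - n (i + 1)) = b i ^ 2 := by
    intro i
    linear_combination - e4 i - a i * hn1 i
  -- explicit formulas for φ
  have hφ1 : ∀ i : ℤ, φ i = b i * (a i + 2 * b i) / a i ^ 2 := by
    intro i
    have hd : m i - m (i - 1) = a i ^ 2 / b i := by
      rw [eq_div_iff (hb i).ne']
      linarith [hm1 i, mul_comm (b i) (m i - m (i - 1))]
    rw [hφ i, hn1 i, hd, div_div_eq_mul_div]
    ring
  have hφ2 : ∀ i : ℤ, φ (i + 1) = b i ^ 2 / (a i * (2 * a i + b i)) := by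
    intro i
    have h1 : (i : ℤ) + 1 - 1 = i := by ring
    have hd : n i - n (i + 1) = b i ^ 2 / a i := by
      rw [eq_div_iff (ha i).ne']
      linarith [hn2 i, mul_comm (a i) (n i - n (i + 1))]
    rw [hφ (i + 1), h1, hm2 i, hd, div_div]
  -- basic inequalities for φ
  have hpos : ∀ i : ℤ, 0 < φ i := by
    intro i; rw [hφ1 i]
    have := ha i; have := hb i
    positivity
  have hlt : ∀ i : ℤ, φ (i + 1) < φ i := by
    intro i; rw [hφ1 i, hφ2 i]; exact abmn_aux_lt _ _ (ha i) (hb i)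
  have h9 : ∀ i : ℤ, 9 * φ (i + 1) ≤ φ i := by
    intro i; rw [hφ1 i, hφ2 i]; exact abmn_aux_nine _ _ (ha i) (hb i)
  have hstep : ∀ i : ℤ, 3 < φ i → 1 / 3 < φ (i + 1) := by
    intro i h3; rw [hφ2 i]; rw [hφ1 i] at h3
    exact abmn_aux_step _ _ (ha i) (hb i) h3
  have hanti : StrictAnti φ := strictAnti_int_of_succ_lt hlt
  have hmono : Antitone φ := hanti.antitone
  -- geometric bounds
  have hup : ∀ N : ℕ, φ (N : ℤ) ≤ φ 0 / 9 ^ N := by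
    intro N
    induction N with
    | zero => simp
    | succ N ih =>
      have h := h9 (N : ℤ)
      rw [pow_succ, ← div_div]
      push_cast
      push_cast at ih
      linarith
  have hdown : ∀ N : ℕ, 9 ^ N * φ 0 ≤ φ (-(N : ℤ)) := by
    intro N
    induction N with
    | zero => simp
    | succ N ih =>
      have h := h9 (-(N : ℤ) - 1)
      rw [show (-(N : ℤ) - 1) + 1 = -(N : ℤ) by ring] at h
      rw [show (-((N + 1 : ℕ) : ℤ)) = -(N : ℤ) - 1 by push_cast; ring, pow_succ]
      nlinarith [pow_pos (show (0:ℝ) < 9 by norm_num) N, hpos (-(N : ℤ))]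
  -- tendsto at +∞
  have htop : Filter.Tendsto φ Filter.atTop (nhds 0) := by
    rw [Metric.tendsto_atTop]
    intro ε hε
    obtain ⟨N, hN⟩ := exists_pow_lt_of_lt_one (div_pos hε (hpos 0))
      (show (1 / 9 : ℝ) < 1 by norm_num)
    refine ⟨(N : ℤ), fun i hi => ?_⟩
    have h1 : φ i ≤ φ (N : ℤ) := hmono hi
    have key : φ 0 / 9 ^ N < ε := by
      have h2 := (lt_div_iff₀' (hpos 0)).mp hN
      rwa [one_div, inv_pow, mul_comm, inv_mul_eq_div] at h2
    rw [Real.dist_eq, sub_zero, abs_of_pos (hpos i)]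
    linarith [hup N]
  -- tendsto at −∞
  have hbot : Filter.Tendsto φ Filter.atBot Filter.atTop := by
    rw [Filter.tendsto_atTop]
    intro C
    obtain ⟨N, hN⟩ := pow_unbounded_of_one_lt (C / φ 0) (show (1:ℝ) < 9 by norm_num)
    filter_upwards [Filter.eventually_le_atBot (-(N : ℤ))] with i hi
    have h1 : φ (-(N : ℤ)) ≤ φ i := hmono hi
    have h2 : C < 9 ^ N * φ 0 := by rwa [div_lt_iff₀ (hpos 0)] at hN
    linarith [hdown N]
  -- existence of the least index with φ ≤ 3
  have hne : ∃ z : ℤ, φ z ≤ 3 := by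
    obtain ⟨z, hz⟩ := (htop.eventually_lt_const (show (0:ℝ) < 3 by norm_num)).exists
    exact ⟨z, hz.le⟩
  have hbd : ∃ bnd : ℤ, ∀ z : ℤ, φ z ≤ 3 → bnd ≤ z := by
    obtain ⟨w, hw⟩ := Filter.eventually_atBot.1 (hbot.eventually_gt_atTop 3)
    refine ⟨w + 1, fun z hz => ?_⟩
    by_contra hc
    push_neg at hc
    exact absurd hz (not_le.2 (hw z (by omega)))
  obtain ⟨k, hk3, hkmin⟩ := Int.exists_least_of_bdd (P := fun z => φ z ≤ 3) hbd hne
  have h3km1 : 3 < φ (k - 1) := by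
    by_contra hc
    push_neg at hc
    have := hkmin _ hc
    omega
  have hk1 : 1 / 3 < φ k := by
    have := hstep (k - 1) h3km1
    rwa [show k - 1 + 1 = k by ring] at this
  refine ⟨⟨k, ⟨hk1, hk3⟩, ?_⟩, hanti, htop, hbot⟩
  rintro j ⟨hj1, hj3⟩
  by_contra hne'
  rcases lt_or_gt_of_ne hne' with hlt' | hgt'
  · have hle : j ≤ k - 1 := by omega
    have := hmono hle
    linarith
  · have hle : k + 1 ≤ j := by omega
    have h1 := hmono hle
    have h2 := h9 k
    linarith
end

section
/- The function s : (0,∞) → (0,∞) is invertible, and its inverse is the map x ↦ 1/s(1/x): for every x ∈ (0,∞) one has s(1/s(1/x)) = x and 1/s(1/s(x)) = x. -/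
lemma wF_gt_one {x : ℝ} (hx : 0 < x) : 1 < wF x := by
  rw [wF]
  nlinarith [Real.sq_sqrt (show (0:ℝ) ≤ 8 * x + 1 by linarith),
    Real.sqrt_nonneg (8 * x + 1)]

lemma sF_pos {x : ℝ} (hx : 0 < x) : 0 < sF x := by
  have h := wF_gt_one hx
  rw [sF]
  exact div_pos (pow_pos (by linarith) 2) (by linarith)

lemma sF_key {x : ℝ} (hx : 0 < x) : sF (1 / sF x) = 1 / x := by
  set ω := wF x with hω
  have h1 : 1 < ω := wF_gt_one hx
  have hsq : ω ^ 2 = 8 * x + 1 := Real.sq_sqrt (by linarith)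
  have hspos : 0 < sF x := sF_pos hx
  have hs : sF x = (ω - 1) ^ 2 / (4 * (ω + 7)) := rfl
  have hne : ω - 1 ≠ 0 := by linarith
  have hw2 : wF (1 / sF x) = (ω + 15) / (ω - 1) := by
    rw [wF, hs]
    have : 8 * (1 / ((ω - 1) ^ 2 / (4 * (ω + 7)))) + 1 = ((ω + 15) / (ω - 1)) ^ 2 := by
      field_simp
      ring
    rw [this, Real.sqrt_sq (div_nonneg (by linarith) (by linarith))]
  rw [sF, hw2]
  have hx' : x ≠ 0 := ne_of_gt hx
  have hden : (ω + 15) / (ω - 1) + 7 ≠ 0 := by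
    have : (ω + 15) / (ω - 1) + 7 = (8 * ω + 8) / (ω - 1) := by field_simp; ring
    rw [this]
    exact ne_of_gt (div_pos (by linarith) (by linarith))
  rw [div_eq_div_iff (mul_ne_zero (by norm_num) hden) hx']
  field_simp
  nlinarith [hsq]

/-- `s : (0,∞) → (0,∞)` is invertible with inverse `x ↦ 1/s(1/x)`: it is a
bijection of `(0,∞)` onto itself and for every `x > 0` one has
`s(1/s(1/x)) = x` and `1/s(1/s(x)) = x`. -/
theorem sF_inverse :
    Set.BijOn sF (Set.Ioi (0 : ℝ)) (Set.Ioi (0 : ℝ)) ∧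
    ∀ x : ℝ, 0 < x → sF (1 / sF (1 / x)) = x ∧ 1 / sF (1 / sF x) = x := by
  have hmain : ∀ x : ℝ, 0 < x → sF (1 / sF (1 / x)) = x ∧ 1 / sF (1 / sF x) = x := by
    intro x hx
    constructor
    · have := sF_key (x := 1 / x) (by positivity)
      rw [this, one_div_one_div]
    · rw [sF_key hx, one_div_one_div]
  refine ⟨?_, hmain⟩
  have hmapsf : Set.MapsTo sF (Set.Ioi 0) (Set.Ioi 0) := fun x hx => sF_pos hx
  have hmapsg : Set.MapsTo (fun x => 1 / sF (1 / x)) (Set.Ioi 0) (Set.Ioi 0) := by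
    intro x hx
    simp only [Set.mem_Ioi] at *
    have : 0 < sF (1 / x) := sF_pos (by positivity)
    positivity
  exact Set.InvOn.bijOn ⟨fun x hx => (hmain x hx).2, fun x hx => (hmain x hx).1⟩ hmapsf hmapsg
end

section
/- There exist universal constants 0 < A₁ ≤ A₂, 0 < F₁ ≤ F₂, C ≥ 0 and c > 0 such that the following holds. Let a, b, m, n : ℤ → ℝ be a positive solution of the ABMN system on ℤ with battlefield index k ∈ ℤ. Then there exist A ∈ [A₁, A₂] and F ∈ [F₁, F₂] such that for every j ≥ k there exist reals ε₁, ε₂, ε₃, ε₄ with |ε_r| ≤ C·exp(−c·2^{j−k}) for r = 1,2,3,4 and: a_j = (m_k − m_{k−1})·2F·2^{2(j−k)}·exp(−2·2^{j−k}·A)·(1+ε₁); b_j = (m_k − m_{k−1})·4F·2^{2(j−k)}·exp(−3·2^{j−k}·A)·(1+ε₂); m_j − m_{j−1} = (m_k − m_{k−1})·F·2^{2(j−k)}·exp(−2^{j−k}·A)·(1+ε₃); n_{j−1} − n_j = (m_k − m_{k−1})·2F·2^{2(j−k)}·exp(−2^{j−k+1}·A)·(1+ε₄). -/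
open Real

lemma abs_exp_sub_one_le_exp_mul_abs {x K : ℝ} (hx : |x| ≤ K) :
    |exp x - 1| ≤ exp K * |x| := by
  have hK : 1 ≤ exp K := one_le_exp ((abs_nonneg x).trans hx)
  rcases le_total 0 x with h | h
  · have h1 : (1 - x) * exp x ≤ 1 := by
      calc (1 - x) * exp x ≤ exp (-x) * exp x := by gcongr; linarith [add_one_le_exp (-x)]
        _ = 1 := by rw [← exp_add, neg_add_cancel, exp_zero]
    have h2 : exp x ≤ exp K := exp_le_exp.2 ((le_abs_self x).trans hx)
    rw [abs_of_nonneg (by linarith [one_le_exp h]), abs_of_nonneg h]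
    nlinarith
  · rw [abs_of_nonpos (by linarith [exp_le_one_iff.2 h]), abs_of_nonpos h]
    nlinarith [add_one_le_exp x]

lemma half_pow_eq_exp (n : ℕ) : (1 / 2 : ℝ) ^ n = exp (-(log 2 * n)) := by
  rw [neg_mul_eq_neg_mul, mul_comm, exp_nat_mul, exp_neg, exp_log two_pos, one_div, inv_pow]

lemma tsum_le_two_mul_of_le_geometric {f : ℕ → ℝ} {M : ℝ} (hf0 : ∀ i, 0 ≤ f i)
    (hf : ∀ i, f i ≤ M * (1 / 2) ^ i) : ∑' i, f i ≤ 2 * M := by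
  have hg : Summable fun i => M * (1 / 2 : ℝ) ^ i := summable_geometric_two.mul_left M
  calc ∑' i, f i ≤ ∑' i, M * (1 / 2 : ℝ) ^ i :=
        (hg.of_nonneg_of_le hf0 hf).tsum_le_tsum hf hg
    _ = 2 * M := by rw [tsum_mul_left, tsum_geometric_two, mul_comm]

lemma eq_add_tsum_sub_tsum_nat_add {x g : ℕ → ℝ} (hg : Summable g)
    (h : ∀ t, x (t + 1) = x t + g t) (t : ℕ) : x t = x 0 + ∑' i, g i - ∑' i, g (i + t) := by
  have hsum : ∑ i ∈ Finset.range t, g i = x t - x 0 := by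
    rw [← Finset.sum_range_sub]
    exact Finset.sum_congr rfl fun i _ => by rw [h]; ring
  rw [← hg.sum_add_tsum_nat_add t, hsum]
  ring

lemma le_pow_two_pow_of_le_sq {v : ℕ → ℝ} (hv : ∀ t, 0 ≤ v t)
    (h : ∀ t, v (t + 1) ≤ v t ^ 2) : ∀ t, v t ≤ v 0 ^ 2 ^ t
  | 0 => by simp
  | t + 1 =>
    calc v (t + 1) ≤ v t ^ 2 := h t
      _ ≤ (v 0 ^ 2 ^ t) ^ 2 := pow_le_pow_left₀ (hv t) (le_pow_two_pow_of_le_sq hv h t) 2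
      _ = v 0 ^ 2 ^ (t + 1) := by rw [← pow_mul, pow_succ]

lemma add_le_mul_half_pow {v : ℕ → ℝ} (h : ∀ t, v (t + 1) ≤ v t / 2) (t : ℕ) :
    ∀ i, v (i + t) ≤ v t * (1 / 2) ^ i
  | 0 => by simp
  | i + 1 =>
    calc v (i + 1 + t) = v (i + t + 1) := by rw [add_right_comm]
      _ ≤ v (i + t) / 2 := h _
      _ ≤ v t * (1 / 2) ^ i / 2 := by gcongr; exact add_le_mul_half_pow h t i
      _ = v t * (1 / 2) ^ (i + 1) := by ring

/-- `v t` stands for `b (k + t) / (2 * a (k + t))`, `k` the battlefield index. -/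
structure IsRatioSeq (v : ℕ → ℝ) : Prop where
  pos : ∀ t, 0 < v t
  succ_mul : ∀ t, v (t + 1) * ((1 + v t) * (1 + 4 * v (t + 1))) = v t ^ 2
  head_le_half : v 0 ≤ 1 / 2

/- `rate v` and `prefactor v` are the constants `A` and `F` of the theorem;
`logRemainder v t` and `tailCorrection v t` are the exponents of the relative errors. -/
noncomputable section

def defect (v : ℕ → ℝ) (t : ℕ) : ℝ := log ((1 + v t) * (1 + 4 * v (t + 1)))

def rate (v : ℕ → ℝ) : ℝ := ∑' i, defect v i * (1 / 2) ^ (i + 1) - log (v 0)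

def logRemainder (v : ℕ → ℝ) (t : ℕ) : ℝ := log (v t) + 2 ^ t * rate v

def logCorrection (v : ℕ → ℝ) (t : ℕ) : ℝ := logRemainder v t + log (1 + v t)

def tailCorrection (v : ℕ → ℝ) (t : ℕ) : ℝ := ∑' i, logCorrection v (i + t)

def prefactor (v : ℕ → ℝ) : ℝ := exp (rate v + tailCorrection v 0)

end

namespace IsRatioSeq

variable {v : ℕ → ℝ} (hv : IsRatioSeq v)
include hv

theorem succ_le_sq (t : ℕ) : v (t + 1) ≤ v t ^ 2 := by
  have h0 := hv.pos t
  have h1 := hv.pos (t + 1)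
  nlinarith [hv.succ_mul t, mul_pos h0 h1, mul_pos (mul_pos h0 h1) h1, mul_pos h1 h1]

theorem le_half_pow_two_pow (t : ℕ) : v t ≤ (1 / 2) ^ 2 ^ t :=
  (le_pow_two_pow_of_le_sq (fun t => (hv.pos t).le) hv.succ_le_sq t).trans
    (pow_le_pow_left₀ (hv.pos 0).le hv.head_le_half _)

theorem le_half (t : ℕ) : v t ≤ 1 / 2 :=
  (hv.le_half_pow_two_pow t).trans (pow_le_of_le_one (by norm_num) (by norm_num) (by positivity))

theorem add_le (t i : ℕ) : v (i + t) ≤ v t * (1 / 2) ^ i :=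
  add_le_mul_half_pow (fun s => (hv.succ_le_sq s).trans (by nlinarith [hv.pos s, hv.le_half s])) t i

theorem add_le_self (t i : ℕ) : v (i + t) ≤ v t :=
  (hv.add_le t i).trans
    (mul_le_of_le_one_right (hv.pos t).le (pow_le_one₀ (by norm_num) (by norm_num)))

theorem defect_nonneg (t : ℕ) : 0 ≤ defect v t :=
  log_nonneg (by nlinarith [hv.pos t, hv.pos (t + 1)])

theorem defect_le (t : ℕ) : defect v t ≤ 4 * v t := by
  have h0 := hv.pos t
  have h1 := hv.pos (t + 1)
  have := log_le_sub_one_of_pos (x := (1 + v t) * (1 + 4 * v (t + 1))) (by positivity)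
  have h2 := hv.succ_le_sq t
  have h3 := hv.le_half t
  rw [defect]
  nlinarith [mul_le_mul_of_nonneg_left h2 h0.le, mul_le_mul_of_nonneg_left h3 h0.le]

theorem log_succ (t : ℕ) : log (v (t + 1)) = 2 * log (v t) - defect v t := by
  have h := congrArg log (hv.succ_mul t)
  rw [log_mul (hv.pos _).ne' (by nlinarith [hv.pos t, hv.pos (t + 1)]), log_pow] at h
  rw [defect]
  push_cast at h
  linarith

theorem summable_defect : Summable fun i => defect v i * (1 / 2) ^ (i + 1) :=
  (summable_geometric_two.mul_left 1).of_nonneg_of_le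
    (fun i => mul_nonneg (hv.defect_nonneg i) (by positivity)) fun i => by
      have := (hv.defect_le i).trans (by linarith [hv.le_half i] : 4 * v i ≤ 2)
      calc defect v i * (1 / 2) ^ (i + 1) ≤ 2 * (1 / 2) ^ (i + 1) := by gcongr
        _ = 1 * (1 / 2) ^ i := by ring

theorem logRemainder_eq (t : ℕ) :
    logRemainder v t = 2 ^ t * ∑' i, defect v (i + t) * (1 / 2) ^ (i + t + 1) := by
  -- `log (v t) / 2 ^ t` drops by `defect v t / 2 ^ (t + 1)` at each step.
  have h := eq_add_tsum_sub_tsum_nat_add (x := fun t => log (v t) * (1 / 2) ^ t)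
    (g := fun i => -(defect v i * (1 / 2) ^ (i + 1))) hv.summable_defect.neg
    (fun t => by rw [hv.log_succ]; ring) t
  simp only [tsum_neg] at h
  have h2 : (2 : ℝ) ^ t * (1 / 2) ^ t = 1 := by rw [← mul_pow]; norm_num
  rw [logRemainder, rate]
  linear_combination (2 : ℝ) ^ t * h - log (v t) * h2

theorem logRemainder_nonneg (t : ℕ) : 0 ≤ logRemainder v t := by
  rw [hv.logRemainder_eq]
  exact mul_nonneg (by positivity)
    (tsum_nonneg fun i => mul_nonneg (hv.defect_nonneg _) (by positivity))

theorem logRemainder_le (t : ℕ) : logRemainder v t ≤ 4 * v t := by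
  have h : ∑' i, defect v (i + t) * (1 / 2) ^ (i + t + 1) ≤
      2 * (4 * v t * (1 / 2) ^ (t + 1)) := by
    refine tsum_le_two_mul_of_le_geometric
      (fun i => mul_nonneg (hv.defect_nonneg _) (by positivity)) fun i => ?_
    calc defect v (i + t) * (1 / 2) ^ (i + t + 1) ≤ 4 * v t * (1 / 2) ^ (i + t + 1) := by
          gcongr
          exact (hv.defect_le _).trans (by linarith [hv.add_le_self t i])
      _ = 4 * v t * (1 / 2) ^ (t + 1) * (1 / 2) ^ i := by ring
  have h2 : (2 : ℝ) ^ t * (1 / 2) ^ t = 1 := by rw [← mul_pow]; norm_num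
  rw [hv.logRemainder_eq]
  calc (2 : ℝ) ^ t * _ ≤ 2 ^ t * (2 * (4 * v t * (1 / 2) ^ (t + 1))) := by gcongr
    _ = 4 * v t := by linear_combination 4 * v t * h2

theorem eq_exp (t : ℕ) : v t = exp (logRemainder v t) * exp (-(2 ^ t * rate v)) := by
  rw [← exp_add, logRemainder, add_neg_cancel_right, exp_log (hv.pos t)]

theorem logCorrection_nonneg (t : ℕ) : 0 ≤ logCorrection v t :=
  add_nonneg (hv.logRemainder_nonneg t) (log_nonneg (by linarith [hv.pos t]))

theorem logCorrection_le (t : ℕ) : logCorrection v t ≤ 5 * v t := by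
  have := log_le_sub_one_of_pos (x := 1 + v t) (by linarith [hv.pos t])
  rw [logCorrection]
  linarith [hv.logRemainder_le t]

theorem summable_logCorrection : Summable (logCorrection v) :=
  (summable_geometric_two.mul_left (5 * v 0)).of_nonneg_of_le hv.logCorrection_nonneg fun i =>
    (hv.logCorrection_le i).trans (by have := hv.add_le 0 i; rw [add_zero] at this; linarith)

theorem tailCorrection_nonneg (t : ℕ) : 0 ≤ tailCorrection v t :=
  tsum_nonneg fun _ => hv.logCorrection_nonneg _

theorem tailCorrection_le (t : ℕ) : tailCorrection v t ≤ 10 * v t := by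
  have := tsum_le_two_mul_of_le_geometric (M := 5 * v t)
    (fun i => hv.logCorrection_nonneg (i + t))
    fun i => (hv.logCorrection_le _).trans (by linarith [hv.add_le t i])
  rw [tailCorrection]
  linarith

theorem eq_prefactor_mul {d : ℕ → ℝ} (hd : ∀ t, 0 < d t)
    (hdrec : ∀ t, d (t + 1) = 4 * v t * (1 + v t) * d t) (t : ℕ) :
    d t = d 0 * prefactor v * 2 ^ (2 * t) * exp (-(2 ^ t * rate v)) *
      exp (-tailCorrection v t) := by
  have hstep (s : ℕ) : log (d (s + 1)) = log 4 + log (v s) + log (1 + v s) + log (d s) := by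
    have := hv.pos s
    rw [hdrec, log_mul (by positivity) (hd s).ne', log_mul (by positivity) (by positivity),
      log_mul (by norm_num) this.ne']
  -- `log (d s) - s log 4 + 2 ^ s A` grows by `logCorrection v s` at each step.
  have h := eq_add_tsum_sub_tsum_nat_add (x := fun s => log (d s) - s * log 4 + 2 ^ s * rate v)
    hv.summable_logCorrection (fun s => by
      simp only [hstep, logCorrection, logRemainder]; push_cast; ring) t
  have h4 : (2 : ℝ) ^ (2 * t) = exp (t * log 4) := by
    rw [exp_nat_mul, exp_log four_pos, pow_mul]; norm_num
  rw [← exp_log (hd t), ← exp_log (hd 0), h4, prefactor, ← exp_add, ← exp_add, ← exp_add,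
    ← exp_add]
  congr 1
  simp only [tailCorrection, add_zero] at h ⊢
  push_cast at h
  linarith

theorem rate_mem : rate v ∈ Set.Icc (-log (v 0)) (4 * v 0 - log (v 0)) := by
  have h := hv.logRemainder_le 0
  have h0 := hv.logRemainder_nonneg 0
  simp only [logRemainder, pow_zero, one_mul] at h h0
  constructor <;> linarith

theorem rate_mem_of_lt (hv9 : 1 / 9 < v 0) : rate v ∈ Set.Icc (log 2) 10 := by
  have h9 : log (v 0) > log (1 / 9) := log_lt_log (by norm_num) hv9
  have h2 : log (v 0) ≤ log (1 / 2) := log_le_log (hv.pos 0) hv.head_le_half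
  rw [one_div, log_inv] at h9 h2
  have := log_le_sub_one_of_pos (by norm_num : (0 : ℝ) < 9)
  obtain ⟨hl, hu⟩ := hv.rate_mem
  constructor <;> linarith [hv.head_le_half]

theorem prefactor_mem_of_lt (hv9 : 1 / 9 < v 0) : prefactor v ∈ Set.Icc 1 (exp 15) := by
  obtain ⟨hl, hu⟩ := hv.rate_mem_of_lt hv9
  have h0 := hv.tailCorrection_nonneg 0
  have h1 := hv.tailCorrection_le 0
  have := log_pos one_lt_two
  exact ⟨one_le_exp (by linarith), exp_le_exp.2 (by linarith [hv.head_le_half])⟩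

theorem abs_exp_sub_one_le_of_abs_le {x : ℝ} {t : ℕ} (hx : |x| ≤ 10 * v t) :
    |exp x - 1| ≤ 10 * exp 5 * exp (-(log 2 * 2 ^ t)) := by
  have h := hv.le_half_pow_two_pow t
  rw [half_pow_eq_exp] at h
  push_cast at h
  calc |exp x - 1| ≤ exp 5 * |x| :=
        abs_exp_sub_one_le_exp_mul_abs (hx.trans (by linarith [hv.le_half t]))
    _ ≤ exp 5 * (10 * exp (-(log 2 * 2 ^ t))) := by gcongr; linarith
    _ = _ := by ring

theorem exists_decay (hv9 : 1 / 9 < v 0) {d : ℕ → ℝ} (hd : ∀ t, 0 < d t)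
    (hdrec : ∀ t, d (t + 1) = 4 * v t * (1 + v t) * d t) :
    ∃ A F : ℝ, A ∈ Set.Icc (log 2) 10 ∧ F ∈ Set.Icc 1 (exp 15) ∧
      ∀ t : ℕ, ∃ e₁ e₂ e₃ e₄ : ℝ,
      |e₁| ≤ 10 * exp 5 * exp (-(log 2 * 2 ^ t)) ∧
      |e₂| ≤ 10 * exp 5 * exp (-(log 2 * 2 ^ t)) ∧
      |e₃| ≤ 10 * exp 5 * exp (-(log 2 * 2 ^ t)) ∧
      |e₄| ≤ 10 * exp 5 * exp (-(log 2 * 2 ^ t)) ∧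
      2 * v t * d t = d 0 * (2 * F) * 2 ^ (2 * t) * exp (-(2 * 2 ^ t * A)) * (1 + e₁) ∧
      4 * v t ^ 2 * d t = d 0 * (4 * F) * 2 ^ (2 * t) * exp (-(3 * 2 ^ t * A)) * (1 + e₂) ∧
      d t = d 0 * F * 2 ^ (2 * t) * exp (-(2 ^ t * A)) * (1 + e₃) ∧
      2 * v t * (1 + 4 * v t) * d t =
        d 0 * (2 * F) * 2 ^ (2 * t) * exp (-(2 ^ (t + 1) * A)) * (1 + e₄) := by
  refine ⟨rate v, prefactor v, hv.rate_mem_of_lt hv9, hv.prefactor_mem_of_lt hv9, fun t => ?_⟩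
  have hR0 := hv.logRemainder_nonneg t
  have hR := hv.logRemainder_le t
  have hT0 := hv.tailCorrection_nonneg t
  have hT := hv.tailCorrection_le t
  have hvt := hv.pos t
  have hL0 : 0 ≤ log (1 + 4 * v t) := log_nonneg (by linarith)
  have hL : log (1 + 4 * v t) ≤ 4 * v t := by
    linarith [log_le_sub_one_of_pos (x := 1 + 4 * v t) (by linarith)]
  have hvd := hv.eq_prefactor_mul hd hdrec t
  refine ⟨exp (logRemainder v t - tailCorrection v t) - 1,
    exp (2 * logRemainder v t - tailCorrection v t) - 1, exp (-tailCorrection v t) - 1,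
    exp (logRemainder v t - tailCorrection v t + log (1 + 4 * v t)) - 1,
    hv.abs_exp_sub_one_le_of_abs_le (abs_le.2 ⟨by linarith, by linarith⟩),
    hv.abs_exp_sub_one_le_of_abs_le (abs_le.2 ⟨by linarith, by linarith⟩),
    hv.abs_exp_sub_one_le_of_abs_le (abs_le.2 ⟨by linarith, by linarith⟩),
    hv.abs_exp_sub_one_le_of_abs_le (abs_le.2 ⟨by linarith, by linarith⟩), ?_, ?_, ?_, ?_⟩ <;>
  rw [add_sub_cancel]
  · rw [hv.eq_exp t, hvd,
      show -(2 * 2 ^ t * rate v) = -(2 ^ t * rate v) + -(2 ^ t * rate v) by ring]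
    simp only [sub_eq_add_neg, exp_add]
    ring
  · rw [hv.eq_exp t, hvd, show -(3 * 2 ^ t * rate v) =
      -(2 ^ t * rate v) + -(2 ^ t * rate v) + -(2 ^ t * rate v) by ring]
    simp only [sub_eq_add_neg, exp_add, two_mul]
    ring
  · exact hvd
  · rw [hvd, pow_succ, show -(2 ^ t * 2 * rate v) = -(2 ^ t * rate v) + -(2 ^ t * rate v) by ring]
    simp only [sub_eq_add_neg, exp_add, exp_log (by linarith : 0 < 1 + 4 * v t)]
    rw [hv.eq_exp t]
    ring

end IsRatioSeq

noncomputable def abmnRatio (a b : ℤ → ℝ) (i : ℤ) : ℝ := b i / (2 * a i)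

namespace IsABMN

variable {a b m n : ℤ → ℝ} (h : IsABMN a b m n) (ha : ∀ i, 0 < a i) (hb : ∀ i, 0 < b i)
include h ha hb

theorem a_sq_eq (i : ℤ) : a i ^ 2 = b i * (m i - m (i - 1)) := by
  obtain ⟨-, -, h1, -, h3, -⟩ := h
  have key : (a i + b i) * (a i ^ 2 - b i * (m i - m (i - 1))) = 0 := by
    linear_combination a i * h3 i - b i * h1 i
  linarith [(mul_eq_zero.1 key).resolve_left (by linarith [ha i, hb i])]

theorem m_sub_pred_pos (i : ℤ) : 0 < m i - m (i - 1) :=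
  pos_of_mul_pos_right (h.a_sq_eq ha hb i ▸ pow_pos (ha i) 2) (hb i).le

theorem m_succ_sub (i : ℤ) : m (i + 1) - m i = 2 * a i + b i := by
  have hsq := h.a_sq_eq ha hb i
  obtain ⟨-, -, -, -, h3, -⟩ := h
  have key : b i * ((m (i + 1) - m i) - (2 * a i + b i)) = 0 := by
    linear_combination hsq - h3 i
  linarith [(mul_eq_zero.1 key).resolve_left (hb i).ne']

theorem n_pred_sub (i : ℤ) : n (i - 1) - n i = a i + 2 * b i := by
  obtain ⟨-, -, -, h2, -, h4⟩ := h
  have key : (a i + b i) * ((n (i - 1) - n i) - (a i + 2 * b i)) = 0 := by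
    linear_combination -h4 i - h2 i
  linarith [(mul_eq_zero.1 key).resolve_left (by linarith [ha i, hb i])]

theorem a_eq_ratio (i : ℤ) : a i = 2 * abmnRatio a b i * (m i - m (i - 1)) := by
  have := ha i
  rw [abmnRatio]
  field_simp
  linear_combination h.a_sq_eq ha hb i

theorem b_eq_ratio (i : ℤ) : b i = 4 * abmnRatio a b i ^ 2 * (m i - m (i - 1)) := by
  have := ha i
  rw [abmnRatio]
  field_simp
  linear_combination 4 * b i * h.a_sq_eq ha hb i

theorem m_succ_sub_eq_ratio (i : ℤ) : m (i + 1) - m i =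
    4 * abmnRatio a b i * (1 + abmnRatio a b i) * (m i - m (i - 1)) := by
  rw [h.m_succ_sub ha hb, h.a_eq_ratio ha hb i, h.b_eq_ratio ha hb i]
  ring

theorem n_pred_sub_eq_ratio (i : ℤ) : n (i - 1) - n i =
    2 * abmnRatio a b i * (1 + 4 * abmnRatio a b i) * (m i - m (i - 1)) := by
  rw [h.n_pred_sub ha hb, h.a_eq_ratio ha hb i, h.b_eq_ratio ha hb i]
  ring

theorem phi_eq_ratio (i : ℤ) : (n (i - 1) - n i) / (m i - m (i - 1)) =
    2 * abmnRatio a b i * (1 + 4 * abmnRatio a b i) := by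
  rw [h.n_pred_sub_eq_ratio ha hb, mul_div_cancel_right₀ _ (h.m_sub_pred_pos ha hb i).ne']

theorem ratio_succ_mul (i : ℤ) :
    abmnRatio a b (i + 1) * ((1 + abmnRatio a b i) * (1 + 4 * abmnRatio a b (i + 1))) =
      abmnRatio a b i ^ 2 := by
  have key : a i * (n i - n (i + 1)) = b i ^ 2 := by
    have hn := h.n_pred_sub ha hb i
    obtain ⟨-, -, -, -, -, h4⟩ := h
    linear_combination -h4 i - a i * hn
  have hn := h.n_pred_sub_eq_ratio ha hb (i + 1)
  rw [add_sub_cancel_right] at hn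
  rw [hn, h.m_succ_sub_eq_ratio ha hb i, h.a_eq_ratio ha hb i, h.b_eq_ratio ha hb i] at key
  have hu : abmnRatio a b i ≠ 0 := (div_pos (hb i) (by linarith [ha i])).ne'
  have hd := (h.m_sub_pred_pos ha hb i).ne'
  have hne : 16 * abmnRatio a b i ^ 2 * (m i - m (i - 1)) ^ 2 ≠ 0 := by positivity
  exact mul_left_cancel₀ hne (by linear_combination key)

theorem isRatioSeq {k : ℤ} (hk : abmnRatio a b k ≤ 1 / 2) :
    IsRatioSeq fun t : ℕ => abmnRatio a b (k + t) where
  pos t := div_pos (hb _) (by linarith [ha (k + t)])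
  succ_mul t := by simpa only [Nat.cast_succ, ← add_assoc] using h.ratio_succ_mul ha hb (k + t)
  head_le_half := by simpa using hk

end IsABMN

lemma mem_Ioc_of_mul_one_add_four_mul_mem {u : ℝ} (hu : 0 < u)
    (h : 2 * u * (1 + 4 * u) ∈ Set.Ioc (1 / 3) 3) : u ∈ Set.Ioc (1 / 9) (1 / 2) :=
  ⟨by nlinarith [h.1], by nlinarith [h.2]⟩

/-- Asymptotic decay of a positive ABMN solution to the right of its battlefield
index `k` (the unique index with `φ_k ∈ (1/3,3]` where
`φᵢ = (nᵢ₋₁ − nᵢ)/(mᵢ − mᵢ₋₁)`), with universal constants. -/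
theorem abmn_decay_right_of_battlefield :
    ∃ A₁ A₂ F₁ F₂ C c : ℝ,
      0 < A₁ ∧ A₁ ≤ A₂ ∧ 0 < F₁ ∧ F₁ ≤ F₂ ∧ 0 ≤ C ∧ 0 < c ∧
      ∀ a b m n : ℤ → ℝ, IsABMN a b m n →
        (∀ i, 0 < a i) → (∀ i, 0 < b i) →
        ∀ k : ℤ,
          (n (k - 1) - n k) / (m k - m (k - 1)) ∈ Set.Ioc (1 / 3 : ℝ) 3 →
          ∃ A F : ℝ, A ∈ Set.Icc A₁ A₂ ∧ F ∈ Set.Icc F₁ F₂ ∧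
            ∀ j : ℤ, k ≤ j →
              ∃ e₁ e₂ e₃ e₄ : ℝ,
                |e₁| ≤ C * Real.exp (-(c * 2 ^ (j - k))) ∧
                |e₂| ≤ C * Real.exp (-(c * 2 ^ (j - k))) ∧
                |e₃| ≤ C * Real.exp (-(c * 2 ^ (j - k))) ∧
                |e₄| ≤ C * Real.exp (-(c * 2 ^ (j - k))) ∧
                a j = (m k - m (k - 1)) * (2 * F) * 2 ^ (2 * (j - k)) *
                  Real.exp (-(2 * 2 ^ (j - k) * A)) * (1 + e₁) ∧
                b j = (m k - m (k - 1)) * (4 * F) * 2 ^ (2 * (j - k)) *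
                  Real.exp (-(3 * 2 ^ (j - k) * A)) * (1 + e₂) ∧
                m j - m (j - 1) = (m k - m (k - 1)) * F * 2 ^ (2 * (j - k)) *
                  Real.exp (-(2 ^ (j - k) * A)) * (1 + e₃) ∧
                n (j - 1) - n j = (m k - m (k - 1)) * (2 * F) * 2 ^ (2 * (j - k)) *
                  Real.exp (-(2 ^ (j - k + 1) * A)) * (1 + e₄) := by
  refine ⟨log 2, 10, 1, exp 15, 10 * exp 5, log 2, log_pos one_lt_two,
    by linarith [log_two_lt_d9], one_pos, one_le_exp (by norm_num), by positivity,
    log_pos one_lt_two, fun a b m n h ha hb k hφ => ?_⟩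
  rw [h.phi_eq_ratio ha hb] at hφ
  have hk := mem_Ioc_of_mul_one_add_four_mul_mem (div_pos (hb k) (by linarith [ha k])) hφ
  obtain ⟨A, F, hA, hF, hdecay⟩ := (h.isRatioSeq ha hb hk.2).exists_decay
    (by simp only [Nat.cast_zero, add_zero]; exact hk.1)
    (d := fun t : ℕ => m (k + t) - m (k + t - 1)) (fun t => h.m_sub_pred_pos ha hb _) fun t => by
      simpa only [Nat.cast_succ, ← add_assoc, add_sub_cancel_right] using
        h.m_succ_sub_eq_ratio ha hb (k + t)
  refine ⟨A, F, hA, hF, fun j hj => ?_⟩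
  obtain ⟨t, rfl⟩ := Int.exists_add_of_le hj
  have h2t : (2 : ℝ) ^ (2 * (t : ℤ)) = 2 ^ (2 * t) := by norm_cast
  have h2s : (2 : ℝ) ^ ((t : ℤ) + 1) = 2 ^ (t + 1) := by norm_cast
  simp only [add_sub_cancel_left, zpow_natCast, h2t, h2s]
  obtain ⟨e₁, e₂, e₃, e₄, h₁, h₂, h₃, h₄, ha', hb', hm', hn'⟩ := hdecay t
  simp only [Nat.cast_zero, add_zero] at ha' hb' hm' hn'
  exact ⟨e₁, e₂, e₃, e₄, h₁, h₂, h₃, h₄, h.a_eq_ratio ha hb _ ▸ ha',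
    h.b_eq_ratio ha hb _ ▸ hb', hm', h.n_pred_sub_eq_ratio ha hb _ ▸ hn'⟩
end

section
/- For every x ∈ (0,∞): the series Σ_{k=−∞}^{j−1} ∏_{i=0}^{k} (c_i(x) − 1) converges (absolutely) for every j ∈ ℤ, and the series Σ_{k=j}^{∞} ∏_{i=0}^{k} (d_i(x) − 1) converges (absolutely) for every j ∈ ℤ. Define m_j = Σ_{k=−∞}^{j−1} ∏_{i=0}^{k} (c_i(x) − 1), n_j = x·Σ_{k=j}^{∞} ∏_{i=0}^{k} (d_i(x) − 1), and, with M_i = m_{i+1} − m_{i−1} and N_i = n_{i−1} − n_{i+1}, define a_i = M_i²·N_i/(M_i + N_i)² and b_i = M_i·N_i²/(M_i + N_i)². Then (a, b, m, n) is a positive solution of the ABMN system on ℤ satisfying m_0 − m_{−1} = 1, n_{−1} − n_0 = x, lim_{j→−∞} m_j = 0 and lim_{j→∞} n_j = 0; and it is the unique positive ABMN solution with these four properties. -/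
/-- `s₋₁(x) = 1/s(1/x)`, the inverse of `s`. -/
noncomputable def sFinv (x : ℝ) : ℝ := 1 / sF (1 / x)

/-- The ℤ-indexed iterates of `s`: `s_k = s^[k]` for `k ≥ 0`, and
`s_{-k} = s₋₁^[k]` for `k ≥ 0`. -/
noncomputable def sIter (k : ℤ) (x : ℝ) : ℝ :=
  if 0 ≤ k then sF^[k.toNat] x else sFinv^[(-k).toNat] x

/-- The two-sided product `∏_{i=0}^{k} h i` for `k : ℤ`: it equals `h 0 ⋯ h k` when
`k ≥ 0`, equals `1` when `k = −1`, and equals `(h (k+1))⁻¹ ⋯ (h (−1))⁻¹` when `k ≤ −2`. -/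
noncomputable def zprod (h : ℤ → ℝ) (k : ℤ) : ℝ :=
  if 0 ≤ k then ∏ i ∈ Finset.range (k.toNat + 1), h i
  else (∏ i ∈ Finset.range ((-k).toNat - 1), h (-1 - (i : ℤ)))⁻¹

/-- `m_j = Σ_{k=−∞}^{j−1} ∏_{i=0}^{k} (c_i(x) − 1)` (summation indexed by `k = j−1−t`). -/
noncomputable def defaultM (x : ℝ) (j : ℤ) : ℝ :=
  ∑' t : ℕ, zprod (fun i => cF (sIter i x) - 1) (j - 1 - t)

/-- `n_j = x · Σ_{k=j}^{∞} ∏_{i=0}^{k} (d_i(x) − 1)` (summation indexed by `k = j+t`). -/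
noncomputable def defaultN (x : ℝ) (j : ℤ) : ℝ :=
  x * ∑' t : ℕ, zprod (fun i => dF (sIter i x) - 1) (j + t)

/-- `M_i = m_{i+1} − m_{i−1}`. -/
noncomputable def defaultMdiff (x : ℝ) (i : ℤ) : ℝ := defaultM x (i + 1) - defaultM x (i - 1)

/-- `N_i = n_{i−1} − n_{i+1}`. -/
noncomputable def defaultNdiff (x : ℝ) (i : ℤ) : ℝ := defaultN x (i - 1) - defaultN x (i + 1)

/-- `a_i = M_i²·N_i/(M_i+N_i)²`. -/
noncomputable def defaultA (x : ℝ) (i : ℤ) : ℝ :=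
  (defaultMdiff x i) ^ 2 * defaultNdiff x i / (defaultMdiff x i + defaultNdiff x i) ^ 2

/-- `b_i = M_i·N_i²/(M_i+N_i)²`. -/
noncomputable def defaultB (x : ℝ) (i : ℤ) : ℝ :=
  defaultMdiff x i * (defaultNdiff x i) ^ 2 / (defaultMdiff x i + defaultNdiff x i) ^ 2

/-!
Substituting `y = (ω² - 1)/8` makes `c`, `d`, `s` rational functions of `ω > 1`. Since `s` at
least halves its argument, `s_i(x) → 0` as `i → ∞` and `s_i(x) → ∞` as `i → -∞`, so eventually
`d_i - 1 ≤ 1/2` forward and `c_i - 1 ≥ 2` backward, and both series converge by the ratio test.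
The identity `y (d(y) - 1) = s(y) (c(y) - 1)` telescopes to
`x ∏_{i<k} (d_i - 1) = s_k(x) ∏_{i<k} (c_i - 1)`, so all differences of `m` and `n` at `k` are
`P = ∏_{i<k} (c_i - 1)` times rational functions of `ω_k`. This gives `a_k = P (ω_k - 1)/4` and
`b_k = P (ω_k - 1)²/16`, and the system becomes an identity in `ω_k`.

For positive `a, b` the system is equivalent to the steps `m_{i+1} - m_i = 2a_i + b_i`,
`m_i - m_{i-1} = a_i²/b_i`, `n_{i-1} - n_i = a_i + 2b_i`, `n_i - n_{i+1} = b_i²/a_i`. As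
`(a, b) ↦ (a²/b, a + 2b)` is injective on positive pairs, the normalisation at `0` fixes
`(a_0, b_0)` and the steps propagate this in both directions; then `m` and `n` are determined up
to additive constants, which the limits at `∓∞` fix.
-/

open Filter Topology

section Scalar

variable {y : ℝ}

lemma one_lt_wF (hy : 0 < y) : 1 < wF y := by
  rw [wF, Real.lt_sqrt zero_le_one]
  linarith

lemma wF_sq_sub_one_div_eight {w : ℝ} (hw : 0 ≤ w) : wF ((w ^ 2 - 1) / 8) = w := by
  rw [wF, show 8 * ((w ^ 2 - 1) / 8) + 1 = w ^ 2 by ring, Real.sqrt_sq hw]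

lemma exists_one_lt_eq_sq_sub_one_div_eight (hy : 0 < y) :
    ∃ w, 1 < w ∧ y = (w ^ 2 - 1) / 8 := by
  refine ⟨wF y, one_lt_wF hy, ?_⟩
  rw [wF, Real.sq_sqrt (by linarith)]
  ring

lemma cF_sub_one_pos (hy : 0 < y) : 0 < cF y - 1 := by
  obtain ⟨w, hw, rfl⟩ := exists_one_lt_eq_sq_sub_one_div_eight hy
  rw [cF, wF_sq_sub_one_div_eight (by linarith)]
  nlinarith

lemma two_le_cF_sub_one (hy : 2 ≤ y) : 2 ≤ cF y - 1 := by
  obtain ⟨w, hw, rfl⟩ := exists_one_lt_eq_sq_sub_one_div_eight (by linarith : 0 < y)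
  rw [cF, wF_sq_sub_one_div_eight (by linarith)]
  nlinarith

lemma dF_sub_one_pos (hy : 0 < y) : 0 < dF y - 1 := by
  obtain ⟨w, hw, rfl⟩ := exists_one_lt_eq_sq_sub_one_div_eight hy
  rw [dF, wF_sq_sub_one_div_eight (by linarith), sub_pos, one_lt_div (by linarith)]
  nlinarith

lemma dF_sub_one_le_half (hy : 0 < y) (hy1 : y ≤ 1) : dF y - 1 ≤ 1 / 2 := by
  obtain ⟨w, hw, rfl⟩ := exists_one_lt_eq_sq_sub_one_div_eight hy
  rw [dF, wF_sq_sub_one_div_eight (by linarith), sub_le_iff_le_add, div_le_iff₀ (by linarith)]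
  nlinarith

lemma sF_pos_s8 (hy : 0 < y) : 0 < sF y := by
  have := one_lt_wF hy
  exact div_pos (pow_pos (by linarith) 2) (by linarith)

lemma sF_le_half (hy : 0 < y) : sF y ≤ y / 2 := by
  obtain ⟨w, hw, rfl⟩ := exists_one_lt_eq_sq_sub_one_div_eight hy
  rw [sF, wF_sq_sub_one_div_eight (by linarith), div_le_iff₀ (by linarith)]
  nlinarith

lemma sF_one_div_sF (hy : 0 < y) : sF (1 / sF y) = 1 / y := by
  obtain ⟨w, hw, rfl⟩ := exists_one_lt_eq_sq_sub_one_div_eight hy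
  have hw' : 0 < w - 1 := by linarith
  have h : 1 / sF ((w ^ 2 - 1) / 8) = (((w + 15) / (w - 1)) ^ 2 - 1) / 8 := by
    rw [sF, wF_sq_sub_one_div_eight (by linarith)]
    field_simp
    ring
  have : w ^ 2 - 1 ≠ 0 := by nlinarith
  rw [h, sF, wF_sq_sub_one_div_eight (by positivity)]
  field_simp
  ring

/-- Both sides equal `(ω - 1)³/64`. -/
lemma mul_dF_sub_one (hy : 0 < y) : y * (dF y - 1) = sF y * (cF y - 1) := by
  obtain ⟨w, hw, rfl⟩ := exists_one_lt_eq_sq_sub_one_div_eight hy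
  rw [dF, sF, cF, wF_sq_sub_one_div_eight (by linarith)]
  have : w + 1 ≠ 0 := by linarith
  have : w + 7 ≠ 0 := by linarith
  field_simp
  ring

end Scalar

section Coefficients

variable {y p : ℝ}

lemma cF_dF_coefficients (hy : 0 < y) (hp : p ≠ 0) :
    (p * cF y) ^ 2 * (p * (y * dF y)) / (p * cF y + p * (y * dF y)) ^ 2
        = p * (wF y - 1) / 4 ∧
      p * cF y * (p * (y * dF y)) ^ 2 / (p * cF y + p * (y * dF y)) ^ 2
        = p * (wF y - 1) ^ 2 / 16 := by
  obtain ⟨w, hw, rfl⟩ := exists_one_lt_eq_sq_sub_one_div_eight hy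
  rw [cF, dF, wF_sq_sub_one_div_eight (by linarith)]
  have : w + 1 ≠ 0 := by linarith
  have : w + 3 ≠ 0 := by linarith
  have hsum : p * ((w + 3) ^ 2 / 16) + p * ((w ^ 2 - 1) / 8 * ((w + 3) ^ 2 / (8 * (w + 1))))
      = p * (w + 3) ^ 3 / 64 := by
    field_simp
    ring
  rw [hsum]
  constructor <;> field_simp <;> ring

lemma cF_dF_step_identities (hy : 0 < y) (hp : p ≠ 0) :
    p * (cF y - 1) = 2 * (p * (wF y - 1) / 4) + p * (wF y - 1) ^ 2 / 16 ∧
      p = (p * (wF y - 1) / 4) ^ 2 / (p * (wF y - 1) ^ 2 / 16) ∧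
      y * p = p * (wF y - 1) / 4 + 2 * (p * (wF y - 1) ^ 2 / 16) ∧
      y * p * (dF y - 1) = (p * (wF y - 1) ^ 2 / 16) ^ 2 / (p * (wF y - 1) / 4) := by
  obtain ⟨w, hw, rfl⟩ := exists_one_lt_eq_sq_sub_one_div_eight hy
  rw [cF, dF, wF_sq_sub_one_div_eight (by linarith)]
  have : w - 1 ≠ 0 := by linarith
  have : w + 1 ≠ 0 := by linarith
  refine ⟨by ring, ?_, by ring, ?_⟩ <;> field_simp <;> ring

end Coefficients

section Halving

variable {g : ℤ → ℝ}

lemma two_pow_mul_le_of_le_half (hg : ∀ i, g (i + 1) ≤ g i / 2) (i : ℤ) (n : ℕ) :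
    2 ^ n * g (i + n) ≤ g i := by
  induction n with
  | zero => simp
  | succ n ih =>
    have := hg (i + n)
    have := pow_pos (two_pos : (0 : ℝ) < 2) n
    rw [pow_succ, Nat.cast_succ, ← add_assoc]
    nlinarith

lemma eventually_le_of_le_half (hpos : ∀ i, 0 < g i) (hg : ∀ i, g (i + 1) ≤ g i / 2) {ε : ℝ}
    (hε : 0 < ε) : ∀ᶠ i in atTop, g i ≤ ε := by
  have hanti : Antitone g := antitone_int_of_succ_le fun i => (hg i).trans (by linarith [hpos i])
  obtain ⟨n, hn⟩ := pow_unbounded_of_one_lt (g 0 / ε) one_lt_two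
  rw [div_lt_iff₀ hε] at hn
  have := two_pow_mul_le_of_le_half hg 0 n
  rw [zero_add] at this
  refine eventually_atTop.2 ⟨n, fun i hi => (hanti hi).trans ?_⟩
  by_contra! h
  nlinarith [mul_lt_mul_of_pos_left h (pow_pos (two_pos : (0 : ℝ) < 2) n)]

lemma eventually_ge_of_le_half (hpos : ∀ i, 0 < g i) (hg : ∀ i, g (i + 1) ≤ g i / 2) (C : ℝ) :
    ∀ᶠ i in atBot, C ≤ g i := by
  have hanti : Antitone g := antitone_int_of_succ_le fun i => (hg i).trans (by linarith [hpos i])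
  obtain ⟨n, hn⟩ := pow_unbounded_of_one_lt (C / g 0) one_lt_two
  rw [div_lt_iff₀ (hpos 0)] at hn
  have := two_pow_mul_le_of_le_half hg (-n) n
  rw [neg_add_cancel] at this
  exact eventually_atBot.2 ⟨-n, fun i hi => by linarith [hanti hi]⟩

end Halving

section Iterates

lemma mapsTo_sF : Set.MapsTo sF (Set.Ioi 0) (Set.Ioi 0) := fun _ hy => sF_pos_s8 hy

lemma mapsTo_sFinv : Set.MapsTo sFinv (Set.Ioi 0) (Set.Ioi 0) :=
  fun _ hy => one_div_pos.2 (sF_pos_s8 (one_div_pos.2 hy))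

lemma sF_sFinv {y : ℝ} (hy : 0 < y) : sF (sFinv y) = y := by
  rw [sFinv, sF_one_div_sF (one_div_pos.2 hy), one_div_one_div]

variable {x : ℝ}

lemma sIter_pos (hx : 0 < x) (k : ℤ) : 0 < sIter k x := by
  unfold sIter
  split_ifs
  · exact mapsTo_sF.iterate _ hx
  · exact mapsTo_sFinv.iterate _ hx

lemma sIter_neg_natCast (n : ℕ) : sIter (-n) x = sFinv^[n] x := by
  rcases n with _ | n
  · simp [sIter]
  · rw [sIter, if_neg (by omega)]
    congr

lemma sIter_add_one (hx : 0 < x) (k : ℤ) : sIter (k + 1) x = sF (sIter k x) := by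
  obtain ⟨n, rfl | rfl⟩ := Int.eq_nat_or_neg k
  · rw [sIter, sIter, if_pos (by omega), if_pos (by omega), ← Function.iterate_succ_apply' sF]
    congr
  · rcases n with _ | n
    · simp [sIter]
    · rw [show -((n + 1 : ℕ) : ℤ) + 1 = -n by push_cast; ring, sIter_neg_natCast,
        sIter_neg_natCast, Function.iterate_succ_apply', sF_sFinv (mapsTo_sFinv.iterate _ hx)]

end Iterates

section Zprod

variable {h : ℤ → ℝ}

lemma zprod_neg_one : zprod h (-1) = 1 := by
  simp [zprod]

lemma zprod_pos (hpos : ∀ i, 0 < h i) (k : ℤ) : 0 < zprod h k := by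
  unfold zprod
  split_ifs
  · exact Finset.prod_pos fun i _ => hpos _
  · exact inv_pos.2 (Finset.prod_pos fun i _ => hpos _)

lemma zprod_add_one (k : ℤ) (hk : h (k + 1) ≠ 0) : zprod h (k + 1) = zprod h k * h (k + 1) := by
  rcases le_or_gt 0 k with hk0 | hk0
  · rw [zprod, zprod, if_pos (by omega), if_pos hk0,
      show (k + 1).toNat + 1 = k.toNat + 1 + 1 by omega, Finset.prod_range_succ]
    congr 2
    omega
  · rcases (show k = -1 ∨ k < -1 by omega) with rfl | hk1
    · simp [zprod]
    · rw [zprod, zprod, if_neg (by omega), if_neg (by omega),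
        show (-k).toNat - 1 = (-(k + 1)).toNat - 1 + 1 by omega, Finset.prod_range_succ,
        show -1 - (((-(k + 1)).toNat - 1 : ℕ) : ℤ) = k + 1 by omega, mul_inv,
        inv_mul_cancel_right₀ hk]

lemma zprod_sub_one (k : ℤ) (hk : h k ≠ 0) : zprod h (k - 1) = zprod h k / h k := by
  have := zprod_add_one (k - 1) (by rwa [sub_add_cancel])
  rw [sub_add_cancel] at this
  rw [eq_div_iff hk, this]

lemma summable_abs_zprod_add_natCast (hpos : ∀ i, 0 < h i)
    (hsmall : ∀ᶠ i in atTop, h i ≤ 1 / 2) (j : ℤ) :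
    Summable fun t : ℕ => |zprod h (j + t)| := by
  refine summable_of_ratio_norm_eventually_le one_half_lt_one ?_
  obtain ⟨K, hK⟩ := eventually_atTop.1 hsmall
  filter_upwards [eventually_ge_atTop (K - j).toNat] with t ht
  rw [Real.norm_eq_abs, Real.norm_eq_abs, abs_abs, abs_abs, Nat.cast_succ, ← add_assoc,
    zprod_add_one _ (hpos _).ne', abs_mul, abs_of_pos (hpos _), mul_comm]
  exact mul_le_mul_of_nonneg_right (hK _ (by omega)) (abs_nonneg _)

lemma summable_abs_zprod_sub_one_sub_natCast (hpos : ∀ i, 0 < h i)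
    (hlarge : ∀ᶠ i in atBot, 2 ≤ h i) (j : ℤ) :
    Summable fun t : ℕ => |zprod h (j - 1 - t)| := by
  refine summable_of_ratio_norm_eventually_le one_half_lt_one ?_
  obtain ⟨K, hK⟩ := eventually_atBot.1 hlarge
  filter_upwards [eventually_ge_atTop (j - K).toNat] with t ht
  have hle : 2 ≤ h (j - 1 - t) := hK _ (by omega)
  rw [Real.norm_eq_abs, Real.norm_eq_abs, abs_abs, abs_abs, Nat.cast_succ,
    show j - 1 - (t + 1 : ℤ) = j - 1 - t - 1 by ring, zprod_sub_one _ (hpos _).ne', abs_div,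
    abs_of_pos (hpos _), div_le_iff₀ (hpos _)]
  nlinarith [abs_nonneg (zprod h (j - 1 - t))]

lemma mul_zprod_eq_mul_zprod {y C D : ℤ → ℝ} (hC : ∀ i, C i ≠ 0) (hD : ∀ i, D i ≠ 0)
    (h : ∀ i, y i * D i = y (i + 1) * C i) (k : ℤ) :
    y 0 * zprod D k = y (k + 1) * zprod C k := by
  refine Int.inductionOn' k (-1) (by simp [zprod_neg_one]) (fun k _ ih => ?_) (fun k _ ih => ?_)
  · rw [zprod_add_one _ (hC _), zprod_add_one _ (hD _), ← mul_assoc, ih]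
    linear_combination zprod C k * h (k + 1)
  · rw [zprod_sub_one _ (hC _), zprod_sub_one _ (hD _), sub_add_cancel]
    field_simp [hC k, hD k]
    linear_combination C k * ih - zprod C k * h k

end Zprod

section Tails

variable {f : ℤ → ℝ}

lemma tsum_add_natCast_eq (j : ℤ) (hf : Summable fun t : ℕ => f (j + t)) :
    ∑' t : ℕ, f (j + t) = f j + ∑' t : ℕ, f (j + 1 + t) := by
  rw [hf.tsum_eq_zero_add]
  push_cast
  simp only [add_zero, add_assoc, add_comm (1 : ℤ)]

lemma tendsto_tsum_add_natCast :
    Tendsto (fun j => ∑' t : ℕ, f (j + t)) atTop (𝓝 0) := by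
  have htoNat : Tendsto Int.toNat atTop atTop :=
    tendsto_atTop_atTop.2 fun n => ⟨n, fun j hj => by omega⟩
  refine ((tendsto_sum_nat_add fun t : ℕ => f t).comp htoNat).congr' ?_
  filter_upwards [eventually_ge_atTop 0] with j hj
  simp only [Function.comp_apply, Nat.cast_add, Int.toNat_of_nonneg hj, add_comm]

lemma tsum_sub_natCast_eq (j : ℤ) (hf : Summable fun t : ℕ => f (j - t)) :
    ∑' t : ℕ, f (j - t) = f j + ∑' t : ℕ, f (j - 1 - t) := by
  rw [hf.tsum_eq_zero_add]
  push_cast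
  simp only [sub_zero, sub_add_eq_sub_sub, sub_right_comm _ (1 : ℤ)]

lemma tendsto_tsum_sub_one_sub_natCast :
    Tendsto (fun j => ∑' t : ℕ, f (j - 1 - t)) atBot (𝓝 0) := by
  have := (tendsto_tsum_add_natCast (f := fun k => f (-1 - k))).comp tendsto_neg_atBot_atTop
  refine this.congr fun j => tsum_congr fun t => ?_
  ring_nf

end Tails

section ABMN

lemma isABMN_iff_steps {a b m n : ℤ → ℝ} (ha : ∀ i, 0 < a i) (hb : ∀ i, 0 < b i) :
    IsABMN a b m n ↔ ∀ i, m (i + 1) - m i = 2 * a i + b i ∧ m i - m (i - 1) = a i ^ 2 / b i ∧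
      n (i - 1) - n i = a i + 2 * b i ∧ n i - n (i + 1) = b i ^ 2 / a i := by
  constructor
  · rintro ⟨-, -, e₁, e₂, e₃, e₄⟩ i
    have hab : a i + b i ≠ 0 := (add_pos (ha i) (hb i)).ne'
    have hm : m (i + 1) - m i = 2 * a i + b i :=
      mul_left_cancel₀ hab (by linear_combination -e₁ i - e₃ i)
    have hn : n (i - 1) - n i = a i + 2 * b i :=
      mul_left_cancel₀ hab (by linear_combination -e₂ i - e₄ i)
    refine ⟨hm, ?_, hn, ?_⟩
    · rw [eq_div_iff (hb i).ne']
      linear_combination -e₃ i - b i * hm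
    · rw [eq_div_iff (ha i).ne']
      linear_combination -e₄ i - a i * hn
  · intro h
    have h' : ∀ i, m (i + 1) - m i = 2 * a i + b i ∧ (m i - m (i - 1)) * b i = a i ^ 2 ∧
        n (i - 1) - n i = a i + 2 * b i ∧ (n i - n (i + 1)) * a i = b i ^ 2 := fun i => by
      rw [← eq_div_iff (hb i).ne', ← eq_div_iff (ha i).ne']
      exact h i
    refine ⟨fun i => (ha i).le, fun i => (hb i).le, fun i => ?_, fun i => ?_, fun i => ?_,
      fun i => ?_⟩ <;> obtain ⟨hm, hm', hn, hn'⟩ := h' i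
    · linear_combination -a i * hm + hm'
    · linear_combination hn' - b i * hn
    · linear_combination -b i * hm - hm'
    · linear_combination -a i * hn - hn'

/-- For fixed `u = a²/b`, eliminating `b` leaves `2a² + u a = u (a + 2b)`, strictly increasing
in `a > 0`. -/
lemma eq_of_sq_div_eq_of_add_two_mul_eq {a b a' b' : ℝ} (ha : 0 < a) (hb : 0 < b)
    (ha' : 0 < a') (hb' : 0 < b') (h₁ : a ^ 2 / b = a' ^ 2 / b')
    (h₂ : a + 2 * b = a' + 2 * b') : a = a' ∧ b = b' := by
  have hupos : 0 < a ^ 2 / b := by positivity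
  have hu : a ^ 2 / b * b = a ^ 2 := div_mul_cancel₀ _ hb.ne'
  rw [eq_div_iff hb'.ne'] at h₁
  generalize a ^ 2 / b = u at hupos hu h₁
  have key : (a - a') * (2 * (a + a') + u) = 0 := by
    linear_combination u * h₂ - 2 * hu + 2 * h₁
  have : a = a' := sub_eq_zero.1 ((mul_eq_zero.1 key).resolve_right (by positivity))
  exact ⟨this, by linarith⟩

lemma eq_of_sub_eq_of_tendsto {g g' : ℤ → ℝ} {l : Filter ℤ} [l.NeBot]
    (hstep : ∀ i, g (i + 1) - g i = g' (i + 1) - g' i) (hg : Tendsto g l (𝓝 0))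
    (hg' : Tendsto g' l (𝓝 0)) : g = g' := by
  have hconst : ∀ i, g i - g' i = g 0 - g' 0 := by
    intro i
    induction i using Int.induction_on with
    | zero => rfl
    | succ i ih => linarith [hstep i]
    | pred i ih =>
      have := hstep (-i - 1)
      rw [sub_add_cancel] at this
      linarith
  have hlim : Tendsto (fun i => g i - g' i) l (𝓝 (g 0 - g' 0)) := by
    simp_rw [hconst]
    exact tendsto_const_nhds
  have h0 := tendsto_nhds_unique hlim (by simpa using hg.sub hg')
  funext i
  linarith [hconst i]

namespace IsABMN

variable {a b m n a' b' m' n' : ℤ → ℝ}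

lemma coeffs_eq (h : IsABMN a b m n) (h' : IsABMN a' b' m' n') (ha : ∀ i, 0 < a i)
    (hb : ∀ i, 0 < b i) (ha' : ∀ i, 0 < a' i) (hb' : ∀ i, 0 < b' i)
    (hm : m 0 - m (-1) = m' 0 - m' (-1)) (hn : n (-1) - n 0 = n' (-1) - n' 0) :
    a = a' ∧ b = b' := by
  have S := (isABMN_iff_steps ha hb).1 h
  have S' := (isABMN_iff_steps ha' hb').1 h'
  have base : a 0 = a' 0 ∧ b 0 = b' 0 := by
    obtain ⟨-, hm₀, hn₀, -⟩ := S 0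
    obtain ⟨-, hm₀', hn₀', -⟩ := S' 0
    rw [zero_sub] at hm₀ hn₀ hm₀' hn₀'
    exact eq_of_sq_div_eq_of_add_two_mul_eq (ha 0) (hb 0) (ha' 0) (hb' 0)
      (by rw [← hm₀, ← hm₀', hm]) (by rw [← hn₀, ← hn₀', hn])
  have up : ∀ i, a i = a' i ∧ b i = b' i →
      a (i + 1) = a' (i + 1) ∧ b (i + 1) = b' (i + 1) := by
    rintro i ⟨hai, hbi⟩
    obtain ⟨-, hm₁, hn₁, -⟩ := S (i + 1)
    obtain ⟨-, hm₁', hn₁', -⟩ := S' (i + 1)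
    rw [add_sub_cancel_right] at hm₁ hn₁ hm₁' hn₁'
    refine eq_of_sq_div_eq_of_add_two_mul_eq (ha _) (hb _) (ha' _) (hb' _) ?_ ?_
    · rw [← hm₁, ← hm₁', (S i).1, (S' i).1, hai, hbi]
    · rw [← hn₁, ← hn₁', (S i).2.2.2, (S' i).2.2.2, hai, hbi]
  have down : ∀ i, a i = a' i ∧ b i = b' i →
      a (i - 1) = a' (i - 1) ∧ b (i - 1) = b' (i - 1) := by
    rintro i ⟨hai, hbi⟩
    obtain ⟨hm₁, -, -, hn₁⟩ := S (i - 1)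
    obtain ⟨hm₁', -, -, hn₁'⟩ := S' (i - 1)
    rw [sub_add_cancel] at hm₁ hn₁ hm₁' hn₁'
    -- backwards, the same injectivity applies to the swapped pair `(b, a)`
    refine (eq_of_sq_div_eq_of_add_two_mul_eq (hb _) (ha _) (hb' _) (ha' _) ?_ ?_).symm
    · rw [← hn₁, ← hn₁', (S i).2.2.1, (S' i).2.2.1, hai, hbi]
    · have e := (S i).2.1
      have e' := (S' i).2.1
      rw [hai, hbi] at e
      linear_combination e - hm₁ - (e' - hm₁')
  have all : ∀ i, a i = a' i ∧ b i = b' i := by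
    intro i
    induction i using Int.induction_on with
    | zero => exact base
    | succ i ih => exact up _ ih
    | pred i ih => exact down _ ih
  exact ⟨funext fun i => (all i).1, funext fun i => (all i).2⟩

lemma eq_of_tendsto (h : IsABMN a b m n) (h' : IsABMN a' b' m' n') (ha : ∀ i, 0 < a i)
    (hb : ∀ i, 0 < b i) (ha' : ∀ i, 0 < a' i) (hb' : ∀ i, 0 < b' i)
    (hm : m 0 - m (-1) = m' 0 - m' (-1)) (hn : n (-1) - n 0 = n' (-1) - n' 0)
    (hm_lim : Tendsto m atBot (𝓝 0)) (hm'_lim : Tendsto m' atBot (𝓝 0))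
    (hn_lim : Tendsto n atTop (𝓝 0)) (hn'_lim : Tendsto n' atTop (𝓝 0)) :
    a = a' ∧ b = b' ∧ m = m' ∧ n = n' := by
  obtain ⟨rfl, rfl⟩ := h.coeffs_eq h' ha hb ha' hb' hm hn
  have S := (isABMN_iff_steps ha hb).1 h
  have S' := (isABMN_iff_steps ha hb).1 h'
  refine ⟨rfl, rfl, eq_of_sub_eq_of_tendsto (fun i => ?_) hm_lim hm'_lim,
    eq_of_sub_eq_of_tendsto (fun i => ?_) hn_lim hn'_lim⟩
  · rw [(S i).1, (S' i).1]
  · linear_combination (S' i).2.2.2 - (S i).2.2.2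

end IsABMN

end ABMN

section DefaultSolution

variable {x : ℝ}

lemma sIter_add_one_le_half (hx : 0 < x) (i : ℤ) : sIter (i + 1) x ≤ sIter i x / 2 := by
  rw [sIter_add_one hx]
  exact sF_le_half (sIter_pos hx i)

lemma summable_abs_zprod_cF (hx : 0 < x) (j : ℤ) :
    Summable fun t : ℕ => |zprod (fun i => cF (sIter i x) - 1) (j - 1 - t)| :=
  summable_abs_zprod_sub_one_sub_natCast (fun i => cF_sub_one_pos (sIter_pos hx i))
    ((eventually_ge_of_le_half (sIter_pos hx) (sIter_add_one_le_half hx) 2).mono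
      fun _ => two_le_cF_sub_one) j

lemma summable_abs_zprod_dF (hx : 0 < x) (j : ℤ) :
    Summable fun t : ℕ => |zprod (fun i => dF (sIter i x) - 1) (j + t)| :=
  summable_abs_zprod_add_natCast (fun i => dF_sub_one_pos (sIter_pos hx i))
    ((eventually_le_of_le_half (sIter_pos hx) (sIter_add_one_le_half hx) one_pos).mono
      fun i => dF_sub_one_le_half (sIter_pos hx i)) j

lemma zprod_cF_pos (hx : 0 < x) (k : ℤ) : 0 < zprod (fun i => cF (sIter i x) - 1) k :=
  zprod_pos (fun i => cF_sub_one_pos (sIter_pos hx i)) k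

lemma defaultM_add_one (hx : 0 < x) (j : ℤ) :
    defaultM x (j + 1) = zprod (fun i => cF (sIter i x) - 1) j + defaultM x j := by
  simp only [defaultM, add_sub_cancel_right]
  exact tsum_sub_natCast_eq j (by simpa using (summable_abs_zprod_cF hx (j + 1)).of_abs)

lemma defaultN_eq_add (hx : 0 < x) (j : ℤ) :
    defaultN x j = x * zprod (fun i => dF (sIter i x) - 1) j + defaultN x (j + 1) := by
  rw [defaultN, defaultN, tsum_add_natCast_eq j (summable_abs_zprod_dF hx j).of_abs, mul_add]

lemma tendsto_defaultM : Tendsto (defaultM x) atBot (𝓝 0) :=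
  tendsto_tsum_sub_one_sub_natCast

lemma tendsto_defaultN : Tendsto (defaultN x) atTop (𝓝 0) := by
  have h := (tendsto_tsum_add_natCast (f := zprod fun i => dF (sIter i x) - 1)).const_mul x
  rwa [mul_zero] at h

lemma defaultM_zero_sub (hx : 0 < x) : defaultM x 0 - defaultM x (-1) = 1 := by
  rw [show (0 : ℤ) = -1 + 1 by norm_num, defaultM_add_one hx, zprod_neg_one]
  ring

lemma defaultN_neg_one_sub (hx : 0 < x) : defaultN x (-1) - defaultN x 0 = x := by
  rw [defaultN_eq_add hx, zprod_neg_one]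
  norm_num

lemma mul_zprod_dF_eq (hx : 0 < x) (k : ℤ) :
    x * zprod (fun i => dF (sIter i x) - 1) k
      = sIter (k + 1) x * zprod (fun i => cF (sIter i x) - 1) k := by
  have h := mul_zprod_eq_mul_zprod (y := fun i => sIter i x)
    (fun i => (cF_sub_one_pos (sIter_pos hx i)).ne')
    (fun i => (dF_sub_one_pos (sIter_pos hx i)).ne')
    (fun i => by rw [mul_dF_sub_one (sIter_pos hx i), sIter_add_one hx]) k
  simpa [sIter] using h

lemma defaultM_defaultN_steps (hx : 0 < x) (k : ℤ) :
    defaultM x (k + 1) - defaultM x k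
        = zprod (fun i => cF (sIter i x) - 1) (k - 1) * (cF (sIter k x) - 1) ∧
      defaultM x k - defaultM x (k - 1) = zprod (fun i => cF (sIter i x) - 1) (k - 1) ∧
      defaultN x (k - 1) - defaultN x k
        = sIter k x * zprod (fun i => cF (sIter i x) - 1) (k - 1) ∧
      defaultN x k - defaultN x (k + 1)
        = sIter k x * zprod (fun i => cF (sIter i x) - 1) (k - 1) * (dF (sIter k x) - 1) := by
  have hc := (cF_sub_one_pos (sIter_pos hx k)).ne'
  have hd := (dF_sub_one_pos (sIter_pos hx k)).ne'
  have hM := defaultM_add_one hx (k - 1)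
  have hN := defaultN_eq_add hx (k - 1)
  have hP := zprod_add_one (h := fun i => cF (sIter i x) - 1) (k - 1)
  have hQ := zprod_add_one (h := fun i => dF (sIter i x) - 1) (k - 1)
  have hr := mul_zprod_dF_eq hx (k - 1)
  simp only [sub_add_cancel] at hM hN hP hQ hr
  refine ⟨?_, ?_, ?_, ?_⟩
  · rw [defaultM_add_one hx, hP hc]
    ring
  · rw [hM]
    ring
  · rw [hN, hr]
    ring
  · rw [defaultN_eq_add hx k, hQ hd, ← mul_assoc, hr]
    ring

lemma defaultA_eq_and_defaultB_eq (hx : 0 < x) (k : ℤ) :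
    defaultA x k = zprod (fun i => cF (sIter i x) - 1) (k - 1) * (wF (sIter k x) - 1) / 4 ∧
      defaultB x k
        = zprod (fun i => cF (sIter i x) - 1) (k - 1) * (wF (sIter k x) - 1) ^ 2 / 16 := by
  obtain ⟨h₁, h₂, h₃, h₄⟩ := defaultM_defaultN_steps hx k
  have hM : defaultMdiff x k
      = zprod (fun i => cF (sIter i x) - 1) (k - 1) * cF (sIter k x) := by
    rw [defaultMdiff, ← sub_add_sub_cancel _ (defaultM x k), h₁, h₂]
    ring
  have hN : defaultNdiff x k = zprod (fun i => cF (sIter i x) - 1) (k - 1)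
      * (sIter k x * dF (sIter k x)) := by
    rw [defaultNdiff, ← sub_add_sub_cancel _ (defaultN x k), h₃, h₄]
    ring
  rw [defaultA, defaultB, hM, hN]
  exact cF_dF_coefficients (sIter_pos hx k) (zprod_cF_pos hx _).ne'

lemma defaultA_pos (hx : 0 < x) (k : ℤ) : 0 < defaultA x k := by
  have := one_lt_wF (sIter_pos hx k)
  have := zprod_cF_pos hx (k - 1)
  rw [(defaultA_eq_and_defaultB_eq hx k).1]
  nlinarith

lemma defaultB_pos (hx : 0 < x) (k : ℤ) : 0 < defaultB x k := by
  have := one_lt_wF (sIter_pos hx k)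
  have := zprod_cF_pos hx (k - 1)
  rw [(defaultA_eq_and_defaultB_eq hx k).2]
  have : 0 < wF (sIter k x) - 1 := by linarith
  positivity

lemma isABMN_default (hx : 0 < x) :
    IsABMN (defaultA x) (defaultB x) (defaultM x) (defaultN x) := by
  refine (isABMN_iff_steps (defaultA_pos hx) (defaultB_pos hx)).2 fun k => ?_
  obtain ⟨h₁, h₂, h₃, h₄⟩ := defaultM_defaultN_steps hx k
  obtain ⟨hA, hB⟩ := defaultA_eq_and_defaultB_eq hx k
  rw [h₁, h₂, h₃, h₄, hA, hB]
  exact cF_dF_step_identities (sIter_pos hx k) (zprod_cF_pos hx _).ne'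

end DefaultSolution

/-- Existence and uniqueness of the default ABMN solution with central ratio `x`:
the defining series converge absolutely, the quadruple `(a,b,m,n)` built from them is
a positive ABMN solution with `m₀ − m₋₁ = 1`, `n₋₁ − n₀ = x`, `m_{−∞} = 0`, `n_∞ = 0`,
and it is the unique positive ABMN solution with these four properties. -/
theorem default_abmn_solution (x : ℝ) (hx : 0 < x) :
    (∀ j : ℤ, Summable fun t : ℕ => |zprod (fun i => cF (sIter i x) - 1) (j - 1 - t)|) ∧
    (∀ j : ℤ, Summable fun t : ℕ => |zprod (fun i => dF (sIter i x) - 1) (j + t)|) ∧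
    IsABMN (defaultA x) (defaultB x) (defaultM x) (defaultN x) ∧
    (∀ i, 0 < defaultA x i) ∧ (∀ i, 0 < defaultB x i) ∧
    defaultM x 0 - defaultM x (-1) = 1 ∧
    defaultN x (-1) - defaultN x 0 = x ∧
    Filter.Tendsto (defaultM x) Filter.atBot (nhds 0) ∧
    Filter.Tendsto (defaultN x) Filter.atTop (nhds 0) ∧
    (∀ a b m n : ℤ → ℝ, IsABMN a b m n → (∀ i, 0 < a i) → (∀ i, 0 < b i) →
      m 0 - m (-1) = 1 → n (-1) - n 0 = x →
      Filter.Tendsto m Filter.atBot (nhds 0) → Filter.Tendsto n Filter.atTop (nhds 0) →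
      a = defaultA x ∧ b = defaultB x ∧ m = defaultM x ∧ n = defaultN x) := by
  refine ⟨summable_abs_zprod_cF hx, summable_abs_zprod_dF hx, isABMN_default hx,
    defaultA_pos hx, defaultB_pos hx, defaultM_zero_sub hx, defaultN_neg_one_sub hx,
    tendsto_defaultM, tendsto_defaultN, ?_⟩
  intro a b m n h ha hb hm hn hm_lim hn_lim
  exact h.eq_of_tendsto (isABMN_default hx) ha hb (defaultA_pos hx) (defaultB_pos hx)
    (by rw [hm, defaultM_zero_sub hx]) (by rw [hn, defaultN_neg_one_sub hx])
    hm_lim tendsto_defaultM hn_lim tendsto_defaultN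
end
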